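/- arXiv:1203.5590 — 5 statements merged into one kernel-verified Lean document; each statement's English description precedes it below -/
import Mathlib

section
/- Let A be the associative ℚ(q)-algebra generated by elements x_{ij} for 1 ≤ i ≤ m, 1 ≤ j ≤ n, subject to the relations: x_{ij} x_{kl} = −q x_{kl} x_{ij} whenever (i = k and j < l) or (i < k and j = l); x_{ij} x_{kl} = −x_{kl} x_{ij} whenever i > k and j < l; x_{ij} x_{kl} = −x_{kl} x_{ij} + (q − q^{-1}) x_{il} x_{kj} whenever i < k and j < l; and x_{ij}² = 0 for all i, j. For a subset S ⊂ {1,...,m}×{1,...,n}, order its elements (i_1,j_1), ..., (i_r,j_r) so that j_1 ≤ ... ≤ j_r and i_p > i_{p+1} whenever j_p = j_{p+1}, and set x_S = x_{i_1 j_1} ⋯ x_{i_r j_r} (with x_∅ = 1). Then the set {x_S : S ⊂ {1,...,m}×{1,...,n}} spans A as a ℚ(q)-vector space. -/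
/-!
Straightening. The algebra is spanned by the words in the generators; order the generators by
column and, within a column, by decreasing row (the order of `orderedList`). Every defining
relation rewrites an out-of-order product `x_a x_b` as a multiple of `x_b x_a`, except that for
`k < i`, `l < j` the rewrite of `x_{ij} x_{kl}` also produces a multiple of `x_{kj} x_{il}`, whose
weight `Σ row · column` is smaller by `(i - k)(j - l)`; and `x_a² = 0` kills repeated letters.
Induction on (weight, number of inversions), ordered lexicographically, therefore brings every
word into the span of the strictly increasing words, which are the `x_S`.
-/

noncomputable section

/-- The base field `ℚ(q)`. -/
abbrev KK : Type := RatFunc ℚ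

/-- The indeterminate `q`. -/
noncomputable def qq : KK := RatFunc.X

/-- The generator `x_{ij}` of the free algebra. -/
def XX (m n : ℕ) (p : Fin m × Fin n) : FreeAlgebra KK (Fin m × Fin n) :=
  FreeAlgebra.ι KK p

/-- The defining relations of the q-deformed exterior algebra. -/
inductive XRel (m n : ℕ) :
    FreeAlgebra KK (Fin m × Fin n) → FreeAlgebra KK (Fin m × Fin n) → Prop
  | qrow (i : Fin m) (j l : Fin n) (h : j < l) :
      XRel m n (XX m n (i, j) * XX m n (i, l)) (-(qq • (XX m n (i, l) * XX m n (i, j))))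
  | qcol (i k : Fin m) (j : Fin n) (h : i < k) :
      XRel m n (XX m n (i, j) * XX m n (k, j)) (-(qq • (XX m n (k, j) * XX m n (i, j))))
  | anti (i k : Fin m) (j l : Fin n) (h1 : k < i) (h2 : j < l) :
      XRel m n (XX m n (i, j) * XX m n (k, l)) (-(XX m n (k, l) * XX m n (i, j)))
  | qser (i k : Fin m) (j l : Fin n) (h1 : i < k) (h2 : j < l) :
      XRel m n (XX m n (i, j) * XX m n (k, l))
        (-(XX m n (k, l) * XX m n (i, j)) + (qq - qq⁻¹) • (XX m n (i, l) * XX m n (k, j)))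
  | sq (i : Fin m) (j : Fin n) : XRel m n (XX m n (i, j) * XX m n (i, j)) 0

/-- The q-deformed exterior algebra `A = Λ_q((ℂ^m)^* ⊗ ℂ^n)`. -/
abbrev Aalg (m n : ℕ) := RingQuot (XRel m n)

/-- The generator `x_{ij}` in `A`. -/
def xgen (m n : ℕ) (p : Fin m × Fin n) : Aalg m n :=
  RingQuot.mkAlgHom KK (XRel m n) (XX m n p)

/-- All pairs `(i,j)`, ordered by `j` ascending and then `i` descending. -/
def orderedList (m n : ℕ) : List (Fin m × Fin n) :=
  (List.finRange n).flatMap fun j => (List.finRange m).reverse.map fun i => (i, j)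

/-- The ordered monomial `x_S` attached to a subset `S`. -/
def xS (m n : ℕ) (S : Finset (Fin m × Fin n)) : Aalg m n :=
  (((orderedList m n).filter fun p => decide (p ∈ S)).map (xgen m n)).prod

namespace List

variable {β : Type*} [LinearOrder β]

def inversions : List β → ℕ
  | [] => 0
  | a :: t => t.countP (· < a) + inversions t

theorem inversions_append_swap_lt {a b : β} (hba : b < a) (u v : List β) :
    inversions (u ++ b :: a :: v) < inversions (u ++ a :: b :: v) := by
  induction u with
  | nil =>
    simp only [nil_append, inversions, countP_cons_of_pos (p := (· < a)) (by simpa using hba),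
      countP_cons_of_neg (p := (· < b)) (by simpa using not_lt_of_gt hba)]
    omega
  | cons c u ih =>
    have hperm : (u ++ b :: a :: v).countP (· < c) = (u ++ a :: b :: v).countP (· < c) :=
      ((Perm.swap a b v).append_left u).countP_eq _
    simp only [cons_append, inversions, hperm]
    omega

end List

section Straightening

open Submodule

variable {K A ι β : Type*} [CommRing K] [Ring A] [Algebra K A] [LinearOrder β]

theorem prod_map_append_cons_cons_mem_span (g : ι → A) (P : ι → ι → Prop) {a b : ι}
    (h : g a * g b ∈ span K (insert (g b * g a) {g a' * g b' | (a') (b') (_ : P a' b')}))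
    (u v : List ι) :
    ((u ++ a :: b :: v).map g).prod ∈ span K (insert ((u ++ b :: a :: v).map g).prod
      {((u ++ a' :: b' :: v).map g).prod | (a') (b') (_ : P a' b')}) := by
  let f : A →ₗ[K] A :=
    LinearMap.mulRight K ((v.map g).prod) ∘ₗ LinearMap.mulLeft K ((u.map g).prod)
  have hf : ∀ x y, ((u ++ x :: y :: v).map g).prod = f (g x * g y) := by
    simp [f, mul_assoc]
  rw [hf a b]
  refine (map_span_le f _ _).2 ?_ (mem_map_of_mem h)
  rintro _ (rfl | ⟨a', b', hP, rfl⟩)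
  · exact subset_span (Or.inl (hf b a).symm)
  · exact subset_span (Or.inr ⟨a', b', hP, hf a' b'⟩)

theorem prod_map_mem_span_sortedLT (key : ι → β) (wt : ι → ℕ) (g : ι → A)
    (hkey : Function.Injective key) (hsq : ∀ a, g a * g a = 0)
    (hexch : ∀ a b, key b < key a → g a * g b ∈
      span K (insert (g b * g a) {g a' * g b' | (a') (b') (_ : wt a' + wt b' < wt a + wt b)}))
    (l : List ι) :
    (l.map g).prod ∈ span K {(l.map g).prod | (l : List ι) (_ : (l.map key).SortedLT)} := by
  induction l using (InvImage.wf (fun l : List ι => toLex ((l.map wt).sum, (l.map key).inversions))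
    wellFounded_lt).induction with
  | _ l ih =>
  by_cases hl : (l.map key).SortedLT
  · exact subset_span ⟨l, hl, rfl⟩
  rw [List.sortedLT_iff_isChain, List.isChain_map,
    List.isChain_iff_forall_rel_of_append_cons_cons] at hl
  push Not at hl
  obtain ⟨a, b, u, v, rfl, hab⟩ := hl
  rcases hab.eq_or_lt with hab | hba
  · rw [hkey hab]
    simp only [List.map_append, List.map_cons, List.prod_append, List.prod_cons,
      ← mul_assoc (g a), hsq, zero_mul, mul_zero, zero_mem]
  have hsum : ∀ x y, ((u ++ x :: y :: v).map wt).sum =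
      (u.map wt).sum + (wt x + wt y) + (v.map wt).sum := by
    intro x y
    simp only [List.map_append, List.map_cons, List.sum_append, List.sum_cons]
    ring
  refine span_le.2 ?_ (prod_map_append_cons_cons_mem_span g _ (hexch a b hba) u v)
  rintro _ (rfl | ⟨a', b', hw, rfl⟩)
  · refine ih _ (Prod.Lex.toLex_lt_toLex.2 (Or.inr ⟨by rw [hsum, hsum, add_comm (wt b)], ?_⟩))
    simpa using List.inversions_append_swap_lt hba (u.map key) (v.map key)
  · exact ih _ (Prod.Lex.toLex_lt_toLex.2 (Or.inl (by rw [hsum, hsum]; omega)))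

theorem span_range_prod_map_eq_top {g : ι → A} (hg : Algebra.adjoin K (Set.range g) = ⊤) :
    span K (Set.range fun l : List ι => (l.map g).prod) = ⊤ := by
  have h := Algebra.adjoin_eq_span K (Set.range g)
  rw [hg, Algebra.top_toSubmodule, ← FreeMonoid.mrange_lift, MonoidHom.coe_mrange] at h
  rw [h]
  congr 1
  ext x
  simp only [Set.mem_range, FreeMonoid.lift_apply, FreeMonoid.toList.surjective.exists]

end Straightening

namespace QExterior

open Submodule

variable {m n : ℕ}

def colRowKey (p : Fin m × Fin n) : Fin n ×ₗ (Fin m)ᵒᵈ := toLex (p.2, OrderDual.toDual p.1)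

def weight (p : Fin m × Fin n) : ℕ := p.1 * p.2

theorem weight_add_weight_lt {i k : Fin m} {j l : Fin n} (hki : k < i) (hlj : l < j) :
    weight (k, j) + weight (i, l) < weight (i, j) + weight (k, l) := by
  have hki' : (k : ℕ) < i := hki
  have hlj' : (l : ℕ) < j := hlj
  simp only [weight]
  nlinarith

theorem colRowKey_injective : Function.Injective (colRowKey (m := m) (n := n)) := by
  rintro ⟨i, j⟩ ⟨i', j'⟩ h
  simpa [colRowKey, and_comm] using h

theorem sortedLT_map_colRowKey_orderedList : ((orderedList m n).map colRowKey).SortedLT := by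
  rw [List.sortedLT_iff_pairwise, orderedList, List.map_flatMap, List.pairwise_flatMap]
  simp only [List.map_map, List.pairwise_map, List.pairwise_reverse, List.mem_map]
  refine ⟨fun j _ => ?_, (List.pairwise_lt_finRange n).imp ?_⟩
  · refine (List.pairwise_lt_finRange m).imp fun h => ?_
    exact Prod.Lex.toLex_lt_toLex.2 (Or.inr ⟨rfl, OrderDual.toDual_lt_toDual.2 h⟩)
  · rintro j j' hj _ ⟨i, -, rfl⟩ _ ⟨i', -, rfl⟩
    exact Prod.Lex.toLex_lt_toLex.2 (Or.inl hj)

theorem prod_map_xgen_eq_xS {l : List (Fin m × Fin n)} (hl : (l.map colRowKey).SortedLT) :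
    (l.map (xgen m n)).prod = xS m n l.toFinset := by
  suffices (orderedList m n).filter (· ∈ l.toFinset) = l by rw [xS, this]
  refine List.map_injective_iff.2 colRowKey_injective ?_
  refine ((sortedLT_map_colRowKey_orderedList.pairwise.sublist
    (List.filter_sublist.map _)).sortedLT).eq_of_mem_iff hl fun k => ?_
  simp [orderedList]

theorem xgen_mul_self (p : Fin m × Fin n) : xgen m n p * xgen m n p = 0 := by
  simpa [xgen] using RingQuot.mkAlgHom_rel KK (XRel.sq p.1 p.2)

theorem xgen_mul_xgen_of_row_eq (i : Fin m) {j l : Fin n} (h : j < l) :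
    xgen m n (i, j) * xgen m n (i, l) = -(qq • (xgen m n (i, l) * xgen m n (i, j))) := by
  simpa [xgen] using RingQuot.mkAlgHom_rel KK (XRel.qrow i j l h)

theorem xgen_mul_xgen_of_col_eq {i k : Fin m} (j : Fin n) (h : i < k) :
    xgen m n (i, j) * xgen m n (k, j) = -(qq • (xgen m n (k, j) * xgen m n (i, j))) := by
  simpa [xgen] using RingQuot.mkAlgHom_rel KK (XRel.qcol i k j h)

theorem xgen_mul_xgen_of_gt_of_lt {i k : Fin m} {j l : Fin n} (h₁ : k < i) (h₂ : j < l) :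
    xgen m n (i, j) * xgen m n (k, l) = -(xgen m n (k, l) * xgen m n (i, j)) := by
  simpa [xgen] using RingQuot.mkAlgHom_rel KK (XRel.anti i k j l h₁ h₂)

theorem xgen_mul_xgen_of_lt_of_lt {i k : Fin m} {j l : Fin n} (h₁ : i < k) (h₂ : j < l) :
    xgen m n (i, j) * xgen m n (k, l) = -(xgen m n (k, l) * xgen m n (i, j)) +
      (qq - qq⁻¹) • (xgen m n (i, l) * xgen m n (k, j)) := by
  simpa [xgen] using RingQuot.mkAlgHom_rel KK (XRel.qser i k j l h₁ h₂)

theorem xgen_mul_xgen_mem_span {a b : Fin m × Fin n} (hba : colRowKey b < colRowKey a) :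
    xgen m n a * xgen m n b ∈ span KK (insert (xgen m n b * xgen m n a)
      {xgen m n a' * xgen m n b' |
        (a') (b') (_ : weight a' + weight b' < weight a + weight b)}) := by
  obtain ⟨i, j⟩ := a
  obtain ⟨k, l⟩ := b
  simp only [colRowKey, Prod.Lex.toLex_lt_toLex, OrderDual.toDual_lt_toDual] at hba
  rcases hba with hlj | ⟨rfl, hik⟩
  · rcases lt_trichotomy i k with hik | rfl | hki
    · have h : xgen m n (i, j) * xgen m n (k, l) = -(xgen m n (k, l) * xgen m n (i, j)) := by
        rw [xgen_mul_xgen_of_gt_of_lt hik hlj, neg_neg]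
      rw [h]
      exact neg_mem (subset_span (Set.mem_insert _ _))
    · have h : xgen m n (i, j) * xgen m n (i, l) =
          -(qq⁻¹ • (xgen m n (i, l) * xgen m n (i, j))) := by
        rw [xgen_mul_xgen_of_row_eq i hlj, smul_neg, smul_smul,
          inv_mul_cancel₀ RatFunc.X_ne_zero, one_smul, neg_neg]
      rw [h]
      exact neg_mem (smul_mem _ _ (subset_span (Set.mem_insert _ _)))
    · have h : xgen m n (i, j) * xgen m n (k, l) = -(xgen m n (k, l) * xgen m n (i, j)) +
          (qq - qq⁻¹) • (xgen m n (k, j) * xgen m n (i, l)) := by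
        rw [xgen_mul_xgen_of_lt_of_lt hki hlj, neg_add, neg_neg, neg_add_cancel_right]
      rw [h]
      exact add_mem (neg_mem (subset_span (Set.mem_insert _ _)))
        (smul_mem _ _ (subset_span (Or.inr ⟨_, _, weight_add_weight_lt hki hlj, rfl⟩)))
  · rw [xgen_mul_xgen_of_col_eq _ hik]
    exact neg_mem (smul_mem _ _ (subset_span (Set.mem_insert _ _)))

theorem adjoin_range_xgen : Algebra.adjoin KK (Set.range (xgen m n)) = ⊤ := by
  rw [show Set.range (xgen m n) = RingQuot.mkAlgHom KK (XRel m n) '' Set.range (FreeAlgebra.ι KK)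
      from Set.range_comp _ _, ← AlgHom.map_adjoin, FreeAlgebra.adjoin_range_ι, Algebra.map_top,
    AlgHom.range_eq_top]
  exact RingQuot.mkAlgHom_surjective KK (XRel m n)

end QExterior

open QExterior

theorem stmt3_general (m n : ℕ) :
    Submodule.span KK (Set.range (xS m n)) = (⊤ : Submodule KK (Aalg m n)) := by
  rw [eq_top_iff, ← span_range_prod_map_eq_top adjoin_range_xgen, Submodule.span_le]
  rintro _ ⟨l, rfl⟩
  refine Submodule.span_mono ?_ (prod_map_mem_span_sortedLT colRowKey weight (xgen m n)
    colRowKey_injective xgen_mul_self (fun _ _ => xgen_mul_xgen_mem_span) l)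
  rintro _ ⟨l, hl, rfl⟩
  exact ⟨_, (prod_map_xgen_eq_xS hl).symm⟩

/-- the ordered monomials `x_S`, `S ⊆ {1,…,m} × {1,…,n}`, span the q-deformed
exterior algebra `A` over `ℚ(q)`. -/
theorem stmt3 (m n : ℕ) (hm : 0 < m) (hn : 0 < n) :
    Submodule.span KK (Set.range (xS m n)) = (⊤ : Submodule KK (Aalg m n)) :=
  stmt3_general m n

end
end

section
/- For every odd positive root α ∈ Φ⁺ of gl(m|n), e'₀(f_α) = 1 if α = α₀ and e'₀(f_α) = 0 otherwise, where f_α is defined recursively by f_{α₀+...} via f_{β+α_k} = ad(f_k)(f_β) = f_k f_β − q^{−(α_k|β)} f_β f_k for k ≠ 0, starting from simple root vectors. -/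
/-!
On a word monomial, `e'₀` removes one occurrence of `f₀` at a time, twisted by the weight of
the letters to its left. Hence for `k ≠ 0` it commutes with right multiplication by `f_k` and
commutes with left multiplication by `f_k` up to the factor `q^{-(α₀|α_k)}`, so
`e'₀(ad(f_k) u) = q^{-(α₀|α_k)} f_k e'₀(u) - q^{-(α_k|β)} e'₀(u) f_k`.
Since `e'₀(f₀) = 1`, the first bracket `ad(f_k)(f₀)` is killed by the symmetry of `(·|·)`,
and every later bracket preserves the kernel of `e'₀`.
-/

noncomputable section

/-- The integral weight lattice `P` of `gl(m|n)`. -/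
abbrev Wt (m n : ℕ) := Fin (m + n) → ℤ

/-- The basis weight `ε_a`. -/
def eps (m n : ℕ) (a : Fin (m + n)) : Wt m n := Pi.single a 1

/-- The supersymmetric bilinear form with `(ε_a|ε_b) = (−1)^{|a|} δ_{ab}`,
where `a` is even iff `a < m`. -/
def bil (m n : ℕ) (x y : Wt m n) : ℤ :=
  ∑ a : Fin (m + n), (if (a : ℕ) < m then 1 else -1) * x a * y a

/-- The index set `I` of simple roots of `gl(m|n)`. -/
abbrev Idx (m n : ℕ) := Fin (m + n - 1)

/-- The simple root `α_k = ε_k − ε_{k+1}`. -/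
def alpha (m n : ℕ) (k : Idx m n) : Wt m n :=
  eps m n ⟨k.1, lt_of_lt_of_le k.2 (Nat.sub_le _ _)⟩ -
    eps m n ⟨k.1 + 1, by have := k.2; omega⟩

/-- The index of the odd simple root `α₀ = ε_{bar 1} − ε_1`. -/
def zeroIdx (m n : ℕ) (hm : 0 < m) (hn : 0 < n) : Idx m n := ⟨m - 1, by omega⟩

/-- The monomial in the free algebra attached to a word. -/
def mono (m n : ℕ) (w : List (Idx m n)) : FreeAlgebra KK (Idx m n) :=
  (w.map (FreeAlgebra.ι KK)).prod

/-- The weight `β = −Σ α_{k_i}` of the monomial attached to a word. -/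
def wtWord (m n : ℕ) (w : List (Idx m n)) : Wt m n := -(w.map (alpha m n)).sum

/-- The twisting coefficient `(−1)^{|β|} q^{(α₀|β)}` for `β` the weight of the word `w`
(its parity being the number of odd letters in `w`). -/
def twist (m n : ℕ) (hm : 0 < m) (hn : 0 < n) (w : List (Idx m n)) : KK :=
  (-1 : KK) ^ (w.count (zeroIdx m n hm hn)) *
    qq ^ (bil m n (alpha m n (zeroIdx m n hm hn)) (wtWord m n w))


/-- The q-bracket adjoint action `ad(f_k)(u) = f_k u − q^{−(α_k|β)} u f_k`
for `u` a root vector of (positive) root `β`. -/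
def adq (m n : ℕ) (k : Idx m n) (β : Wt m n) (u : FreeAlgebra KK (Idx m n)) :
    FreeAlgebra KK (Idx m n) :=
  FreeAlgebra.ι KK k * u - qq ^ (-(bil m n (alpha m n k) β)) • (u * FreeAlgebra.ι KK k)

/-- Interpret a natural number (known to be in range) as an index in `I`. -/
def toIdx (m n : ℕ) (hmn : 0 < m + n - 1) (t : ℕ) : Idx m n :=
  ⟨t % (m + n - 1), Nat.mod_lt _ hmn⟩

/-- The sequence of simple indices used to build `f_α` for the odd root
`α = α_a + … + α_b` (with `a ≤ m−1 ≤ b`): first extend to the left from the odd simple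
root, then to the right. -/
def rootChain (m : ℕ) (a b : ℕ) : List ℕ :=
  (List.range' a (m - 1 - a)).reverse ++ List.range' m (b - (m - 1))

/-- The root vector `f_α` for the odd positive root `α = α_a + … + α_b`, built recursively
by `f_{β+α_k} = ad(f_k)(f_β) = f_k f_β − q^{−(α_k|β)} f_β f_k` starting from `f_{α₀}`. -/
def fRoot (m n : ℕ) (hm : 0 < m) (hn : 0 < n) (a b : ℕ) : FreeAlgebra KK (Idx m n) :=
  ((rootChain m a b).foldl
    (fun p t =>
      (adq m n (toIdx m n (by omega) t) p.2 p.1,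
        p.2 + alpha m n (toIdx m n (by omega) t)))
    (FreeAlgebra.ι KK (zeroIdx m n hm hn), alpha m n (zeroIdx m n hm hn))).1

open FreeAlgebra

theorem FreeAlgebra.basisFreeMonoid_apply (R X : Type*) [CommSemiring R] (w : FreeMonoid X) :
    basisFreeMonoid R X w = (w.toList.map (ι R)).prod := by
  simp [basisFreeMonoid, equivMonoidAlgebraFreeMonoid, AlgEquiv.ofAlgHom, FreeMonoid.lift_apply]

theorem FreeAlgebra.linearMap_ext_list_prod {R X M : Type*} [CommSemiring R] [AddCommMonoid M]
    [Module R M] {f g : FreeAlgebra R X →ₗ[R] M}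
    (h : ∀ w : List X, f (w.map (ι R)).prod = g (w.map (ι R)).prod) : f = g :=
  (basisFreeMonoid R X).ext fun w => by
    simpa only [basisFreeMonoid_apply] using h w.toList

section Weights

variable (m n : ℕ)

theorem bil_comm (x y : Wt m n) : bil m n x y = bil m n y x := by
  simp only [bil]
  exact Finset.sum_congr rfl fun _ _ => by ring

theorem bil_add_right (x y z : Wt m n) : bil m n x (y + z) = bil m n x y + bil m n x z := by
  simp only [bil, Pi.add_apply, mul_add, Finset.sum_add_distrib]

theorem bil_neg_right (x y : Wt m n) : bil m n x (-y) = -bil m n x y := by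
  simp only [bil, Pi.neg_apply, mul_neg, Finset.sum_neg_distrib]

theorem wtWord_cons (k : Idx m n) (w : List (Idx m n)) :
    wtWord m n (k :: w) = -alpha m n k + wtWord m n w := by
  simp only [wtWord, List.map_cons, List.sum_cons, neg_add]

variable (hm : 0 < m) (hn : 0 < n)

theorem twist_nil : twist m n hm hn [] = 1 := by
  simp [twist, wtWord, bil]

theorem twist_cons {k : Idx m n} (hk : k ≠ zeroIdx m n hm hn) (w : List (Idx m n)) :
    twist m n hm hn (k :: w) =
      qq ^ (-bil m n (alpha m n (zeroIdx m n hm hn)) (alpha m n k)) * twist m n hm hn w := by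
  rw [twist, twist, List.count_cons_of_ne hk, wtWord_cons, bil_add_right,
    bil_neg_right, zpow_add₀ RatFunc.X_ne_zero, qq]
  ring

end Weights

theorem mono_cons (m n : ℕ) (k : Idx m n) (w : List (Idx m n)) :
    mono m n (k :: w) = ι KK k * mono m n w := by
  simp [mono]

theorem mono_concat (m n : ℕ) (k : Idx m n) (w : List (Idx m n)) :
    mono m n (w ++ [k]) = mono m n w * ι KK k := by
  simp [mono]

theorem mem_rootChain {m a b t : ℕ} (hm : 0 < m) :
    t ∈ rootChain m a b ↔ a ≤ t ∧ t < m - 1 ∨ m ≤ t ∧ t ≤ b := by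
  simp only [rootChain, List.mem_append, List.mem_reverse, List.mem_range'_1]
  omega

theorem rootChain_eq_nil_iff {m a b : ℕ} : rootChain m a b = [] ↔ m - 1 ≤ a ∧ b ≤ m - 1 := by
  simp only [rootChain, List.append_eq_nil_iff, List.reverse_eq_nil_iff, List.range'_eq_nil_iff]
  omega

theorem toIdx_ne_zeroIdx {m n : ℕ} (hm : 0 < m) (hn : 0 < n) (hmn : 0 < m + n - 1) {t : ℕ}
    (ht : t < m + n - 1) (ht₀ : t ≠ m - 1) : toIdx m n hmn t ≠ zeroIdx m n hm hn := by
  intro h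
  exact ht₀ (by simpa [toIdx, zeroIdx, Nat.mod_eq_of_lt ht] using congrArg Fin.val h)

/-- The defining property of `e'₀`, written out on word monomials. -/
def IsTwistedDerivation (m n : ℕ) (hm : 0 < m) (hn : 0 < n)
    (E : FreeAlgebra KK (Idx m n) →ₗ[KK] FreeAlgebra KK (Idx m n)) : Prop :=
  ∀ w : List (Idx m n), E (mono m n w) = ∑ p : Fin w.length,
    if w.get p = zeroIdx m n hm hn then twist m n hm hn (w.take p) • mono m n (w.eraseIdx p)
    else 0

namespace IsTwistedDerivation

variable {m n : ℕ} {hm : 0 < m} {hn : 0 < n}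
  {E : FreeAlgebra KK (Idx m n) →ₗ[KK] FreeAlgebra KK (Idx m n)}

theorem map_ι_zeroIdx (hE : IsTwistedDerivation m n hm hn E) :
    E (ι KK (zeroIdx m n hm hn)) = 1 := by
  simpa [mono, twist_nil] using hE [zeroIdx m n hm hn]

theorem map_ι_mul (hE : IsTwistedDerivation m n hm hn E) {k : Idx m n}
    (hk : k ≠ zeroIdx m n hm hn) (u : FreeAlgebra KK (Idx m n)) :
    E (ι KK k * u) =
      qq ^ (-bil m n (alpha m n (zeroIdx m n hm hn)) (alpha m n k)) • (ι KK k * E u) := by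
  have on_words : ∀ w : List (Idx m n), E (ι KK k * mono m n w) =
      qq ^ (-bil m n (alpha m n (zeroIdx m n hm hn)) (alpha m n k)) •
        (ι KK k * E (mono m n w)) := by
    intro w
    rw [← mono_cons, hE, hE, Finset.mul_sum, Finset.smul_sum]
    refine (Fin.sum_univ_succ (n := w.length) _).trans ?_
    rw [if_neg (by simpa using hk), zero_add]
    refine Finset.sum_congr rfl fun p _ => ?_
    simp only [List.get_eq_getElem, Fin.val_succ, List.getElem_cons_succ, List.take_succ_cons,
      List.eraseIdx_cons_succ]
    split_ifs
    · rw [twist_cons m n hm hn hk, mono_cons, mul_smul_comm, smul_smul]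
    · rw [mul_zero, smul_zero]
  have h : E ∘ₗ LinearMap.mulLeft KK (ι KK k) =
      qq ^ (-bil m n (alpha m n (zeroIdx m n hm hn)) (alpha m n k)) •
        (LinearMap.mulLeft KK (ι KK k) ∘ₗ E) :=
    linearMap_ext_list_prod on_words
  simpa using LinearMap.congr_fun h u

theorem map_mul_ι (hE : IsTwistedDerivation m n hm hn E) {k : Idx m n}
    (hk : k ≠ zeroIdx m n hm hn) (u : FreeAlgebra KK (Idx m n)) :
    E (u * ι KK k) = E u * ι KK k := by
  have on_words : ∀ w : List (Idx m n), E (mono m n w * ι KK k) = E (mono m n w) * ι KK k := by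
    intro w
    have hlen : (w ++ [k]).length = w.length + 1 := by simp
    rw [← mono_concat, hE, hE, Finset.sum_mul, ← Fin.sum_congr' _ hlen.symm,
      Fin.sum_univ_castSucc, if_neg (by simpa [List.getElem_concat_length] using hk), add_zero]
    refine Finset.sum_congr rfl fun p _ => ?_
    have hp : (p : ℕ) < w.length := p.2
    simp only [List.get_eq_getElem, Fin.val_cast, Fin.val_castSucc, List.getElem_append_left hp,
      List.take_append_of_le_length hp.le, List.eraseIdx_append_of_lt_length hp, mono_concat]
    split_ifs
    · rw [smul_mul_assoc]
    · rw [zero_mul]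
  have h : E ∘ₗ LinearMap.mulRight KK (ι KK k) = LinearMap.mulRight KK (ι KK k) ∘ₗ E :=
    linearMap_ext_list_prod on_words
  simpa using LinearMap.congr_fun h u

theorem map_adq (hE : IsTwistedDerivation m n hm hn E) {k : Idx m n}
    (hk : k ≠ zeroIdx m n hm hn) (β : Wt m n) (u : FreeAlgebra KK (Idx m n)) :
    E (adq m n k β u) =
      qq ^ (-bil m n (alpha m n (zeroIdx m n hm hn)) (alpha m n k)) • (ι KK k * E u) -
        qq ^ (-bil m n (alpha m n k) β) • (E u * ι KK k) := by
  rw [adq, map_sub, map_smul, hE.map_ι_mul hk, hE.map_mul_ι hk]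

theorem map_adq_ι_zeroIdx (hE : IsTwistedDerivation m n hm hn E) {k : Idx m n}
    (hk : k ≠ zeroIdx m n hm hn) :
    E (adq m n k (alpha m n (zeroIdx m n hm hn)) (ι KK (zeroIdx m n hm hn))) = 0 := by
  rw [hE.map_adq hk, hE.map_ι_zeroIdx, mul_one, one_mul, bil_comm, sub_self]

theorem map_foldl_adq_eq_zero (hE : IsTwistedDerivation m n hm hn E) (hmn : 0 < m + n - 1)
    (L : List ℕ) (hL : ∀ t ∈ L, toIdx m n hmn t ≠ zeroIdx m n hm hn)
    {u : FreeAlgebra KK (Idx m n)} (hu : E u = 0) (β : Wt m n) :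
    E (L.foldl (fun p t => (adq m n (toIdx m n hmn t) p.2 p.1,
      p.2 + alpha m n (toIdx m n hmn t))) (u, β)).1 = 0 := by
  induction L generalizing u β with
  | nil => exact hu
  | cons t L ih =>
    rw [List.foldl_cons]
    refine ih (fun s hs => hL s (List.mem_cons_of_mem t hs)) ?_ _
    simp [hE.map_adq (hL t List.mem_cons_self), hu]

end IsTwistedDerivation

/-- for the twisted derivation `e'₀` (characterized on word monomials by the
explicit derivation formula) and every odd positive root `α = α_a + … + α_b` (with
`a ≤ m−1 ≤ b`), one has `e'₀(f_α) = 1` if `α = α₀` and `e'₀(f_α) = 0` otherwise. -/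
theorem stmt8 (m n : ℕ) (hm : 0 < m) (hn : 0 < n)
    (E : FreeAlgebra KK (Idx m n) →ₗ[KK] FreeAlgebra KK (Idx m n))
    (hE : ∀ w : List (Idx m n),
      E (mono m n w) = ∑ p : Fin w.length,
        if w.get p = zeroIdx m n hm hn then
          twist m n hm hn (w.take p) • mono m n (w.eraseIdx p)
        else 0) :
    ∀ a b : ℕ, a ≤ m - 1 → m - 1 ≤ b → b < m + n - 1 →
      E (fRoot m n hm hn a b) = if a = m - 1 ∧ b = m - 1 then 1 else 0 := by
  intro a b ha hb hbn
  have hE : IsTwistedDerivation m n hm hn E := hE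
  have hmn : 0 < m + n - 1 := by omega
  have chain_avoids_zero : ∀ t ∈ rootChain m a b, toIdx m n hmn t ≠ zeroIdx m n hm hn := by
    intro t ht
    have := (mem_rootChain hm).1 ht
    exact toIdx_ne_zeroIdx hm hn hmn (by omega) (by omega)
  split_ifs with hab
  · rw [fRoot, rootChain_eq_nil_iff.2 (by omega), List.foldl_nil]
    exact hE.map_ι_zeroIdx
  · obtain ⟨t, L, hL⟩ := List.exists_cons_of_ne_nil
      (mt (rootChain_eq_nil_iff (m := m) (a := a) (b := b)).1 (by omega))
    rw [hL] at chain_avoids_zero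
    rw [fRoot, hL, List.foldl_cons]
    exact hE.map_foldl_adq_eq_zero hmn L (fun s hs => chain_avoids_zero s (.tail t hs))
      (hE.map_adq_ι_zeroIdx (chain_avoids_zero t List.mem_cons_self)) _

end
end

section
/- Let 𝔸 be a linearly ordered Z₂-graded alphabet, λ a partition, and λ^π its 180°-rotation (anti-normal shape). For T an 𝔸-semistandard tableau of shape λ^π and a ∈ 𝔸, the reverse column insertion T ← a (defined by: in the right-most column, if |a| = 0 replace the largest entry ≤ a by a, if |a| = 1 replace the largest entry < a by a, bump the replaced entry into the next column to the left; if no such entry exists, place a on top of the column and stop) produces an 𝔸-semistandard tableau of an anti-normal shape μ^π where μ is a partition with λ ⊂ μ and |μ| = |λ| + 1. -/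
/-!
Each step of reverse column insertion replaces the largest entry `x` of a column that may stand to
the left of the incoming letter `a` in a row; taking the largest one keeps the column strict in
the graded sense, and `x` moves on to the next column to the left. The invariant carried along is
that a letter bumped from height `r₀` lies row-before every entry at height `≤ r₀` of the column it
left and row-after the entry at height `r₀` of the column it enters. This keeps the rows
semistandard, and when the letter finally lands on top of a column, that column had length at most
`r₀`, less than its right neighbour, so column lengths stay weakly decreasing. Exactly one column
grows by one box, and conjugating the column lengths gives `μ ⊇ λ` with `|μ| = |λ| + 1`.
-/

/-- A partition: a weakly decreasing sequence of naturals with finite support. -/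
structure Ptn where
  f : ℕ → ℕ
  mono : ∀ i, f (i + 1) ≤ f i
  fin : ∃ N, ∀ i, N ≤ i → f i = 0

/-- The `j`-th part (1-indexed) of the conjugate of the sequence `g`. -/
noncomputable def conjSeq (g : ℕ → ℕ) (j : ℕ) : ℕ := Set.ncard {i : ℕ | j ≤ g i}

section AntiNormal

variable {A : Type*} [LinearOrder A] [Inhabited A]

/-- The relation between an entry and the one just below it in a column:
weakly increasing, with equality allowed only for odd letters (`pr x = true`). -/
def colRel (pr : A → Bool) (x y : A) : Prop := x ≤ y ∧ (x = y → pr x = true)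

/-- The relation between an entry and an entry to its right in a row:
weakly increasing, with equality allowed only for even letters (`pr x = false`). -/
def rowRel (pr : A → Bool) (x y : A) : Prop := x ≤ y ∧ (x = y → pr x = false)

/-- The entry of a column (listed top-to-bottom) at height `r` from the bottom. -/
def bottomGet (l : List A) (r : ℕ) : A := l.getD (l.length - 1 - r) default

/-- An anti-normal (bottom-justified) semistandard tableau, given by its columns
`c 0, c 1, …` enumerated from the right, each listed top-to-bottom. -/
def IsAntiSSYT (pr : A → Bool) (c : ℕ → List A) : Prop :=
  (∀ j, (c j).Chain' (colRel pr)) ∧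
  (∀ j r, r < (c (j + 1)).length → r < (c j).length →
    rowRel pr (bottomGet (c (j + 1)) r) (bottomGet (c j) r))

/-- The columns `c` have the anti-normal shape `λ^π`: the `j`-th column from the right has
length `λ'_j`. -/
def hasShapePi (p : Ptn) (c : ℕ → List A) : Prop :=
  ∀ j, (c j).length = conjSeq p.f (j + 1)

/-- The bumping condition: for even `a` we bump the largest entry `≤ a`, for odd `a` the
largest entry `< a`. -/
def bumpCond (pr : A → Bool) (a x : A) : Bool :=
  if pr a then decide (x < a) else decide (x ≤ a)

/-- The last (bottom-most) index of the column satisfying the bumping condition. -/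
def lastIdx (l : List A) (pb : A → Bool) : Option ℕ :=
  ((List.range l.length).filter fun i => pb (l.getD i default)).max?

/-- Reverse column insertion (with fuel), starting at column `j`. -/
def insertAux (pr : A → Bool) : ℕ → (ℕ → List A) → ℕ → A → (ℕ → List A)
  | 0, c, _, _ => c
  | fuel + 1, c, j, a =>
    match lastIdx (c j) (bumpCond pr a) with
    | none => Function.update c j (a :: c j)
    | some i =>
        insertAux pr fuel (Function.update c j ((c j).set i a)) (j + 1) ((c j).getD i default)

/-- Reverse column insertion `T ← a` for a tableau of anti-normal shape `λ^π`. -/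
def colInsert (pr : A → Bool) (p : Ptn) (c : ℕ → List A) (a : A) : ℕ → List A :=
  insertAux pr (p.f 0 + 2) c 0 a

open Finset Function

lemma Finset.sum_update_add {ι M : Type*} [DecidableEq ι] [AddCommMonoid M] {s : Finset ι} {i : ι}
    (hi : i ∈ s) (f : ι → M) (b : M) : ∑ k ∈ s, update f i (f i + b) k = ∑ k ∈ s, f k + b := by
  rw [sum_update_of_mem hi, sdiff_singleton_eq_erase, ← add_sum_erase s f hi]
  abel

lemma antitone_update_succ {L : ℕ → ℕ} {j : ℕ} (hL : Antitone L)
    (hj : ∀ j', j = j' + 1 → L j < L j') : Antitone (update L j (L j + 1)) := by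
  refine antitone_nat_of_succ_le fun k => ?_
  by_cases hk₁ : k + 1 = j
  · subst hk₁
    rw [update_self, update_of_ne k.succ_ne_self.symm]
    exact hj k rfl
  · rw [update_of_ne hk₁]
    rcases eq_or_ne k j with rfl | hk
    · rw [update_self]
      exact (hL k.le_succ).trans (L k).le_succ
    · rw [update_of_ne hk]
      exact hL k.le_succ

section Conjugate

variable {g g' : ℕ → ℕ} {J : ℕ}

lemma finite_setOf_succ_le (hJ : ∀ j, J ≤ j → g j = 0) (i : ℕ) : {j | i + 1 ≤ g j}.Finite :=
  (Set.finite_Iio J).subset fun j (hj : i + 1 ≤ g j) => by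
    by_contra hjJ
    have := hJ j (not_lt.mp hjJ)
    omega

lemma conjSeq_succ_le_iff (hg : Antitone g) (hJ : ∀ j, J ≤ j → g j = 0) (i j : ℕ) :
    j + 1 ≤ conjSeq g (i + 1) ↔ i + 1 ≤ g j := by
  constructor
  · intro h
    by_contra! hgj
    have hsub : {k | i + 1 ≤ g k} ⊆ Set.Iio j := fun k (hk : i + 1 ≤ g k) =>
      Set.mem_Iio.mpr <| by
        by_contra! hjk
        have := hg hjk
        omega
    have := Set.ncard_le_ncard hsub (Set.finite_Iio j)
    rw [Set.ncard_Iio_nat] at this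
    exact absurd h (by unfold conjSeq; omega)
  · intro h
    have hsub : Set.Iio (j + 1) ⊆ {k | i + 1 ≤ g k} := fun k (hk : k < j + 1) =>
      le_trans h (hg (Nat.le_of_lt_succ hk))
    have := Set.ncard_le_ncard hsub (finite_setOf_succ_le hJ i)
    rwa [Set.ncard_Iio_nat] at this

lemma conjSeq_succ_eq_zero (hg : Antitone g) {i : ℕ} (hi : g 0 ≤ i) : conjSeq g (i + 1) = 0 := by
  have : {k | i + 1 ≤ g k} = ∅ := Set.eq_empty_of_forall_notMem fun k (hk : i + 1 ≤ g k) => by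
    have := hg (Nat.zero_le k)
    omega
  rw [conjSeq, this, Set.ncard_empty]

lemma conjSeq_le_conjSeq (hgg' : ∀ j, g j ≤ g' j) (hJ : ∀ j, J ≤ j → g' j = 0) (i : ℕ) :
    conjSeq g (i + 1) ≤ conjSeq g' (i + 1) :=
  Set.ncard_le_ncard (fun k (hk : i + 1 ≤ g k) => le_trans hk (hgg' k))
    (finite_setOf_succ_le hJ i)

lemma conjSeq_conjSeq (hg : Antitone g) (hJ : ∀ j, J ≤ j → g j = 0) (j : ℕ) :
    conjSeq (fun i => conjSeq g (i + 1)) (j + 1) = g j := by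
  have : {i | j + 1 ≤ conjSeq g (i + 1)} = Set.Iio (g j) := by
    ext i
    simp only [Set.mem_ofPred_eq, Set.mem_Iio, conjSeq_succ_le_iff hg hJ]
    omega
  rw [conjSeq, this, Set.ncard_Iio_nat]

lemma conjSeq_succ_eq_card (hJ : ∀ j, J ≤ j → g j = 0) (i : ℕ) :
    conjSeq g (i + 1) = #{j ∈ range J | i + 1 ≤ g j} := by
  rw [conjSeq, ← Set.ncard_coe_finset]
  congr 1
  ext j
  simp only [Set.mem_ofPred_eq, coe_filter, mem_range, iff_and_self]
  intro hj
  by_contra! hjJ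
  have := hJ j hjJ
  omega

lemma sum_range_conjSeq (hJ : ∀ j, J ≤ j → g j = 0) {N : ℕ} (hN : ∀ j, g j ≤ N) :
    ∑ i ∈ range N, conjSeq g (i + 1) = ∑ j ∈ range J, g j := by
  simp_rw [conjSeq_succ_eq_card hJ, card_filter]
  rw [sum_comm]
  refine sum_congr rfl fun j _ => ?_
  have : {i ∈ range N | i + 1 ≤ g j} = range (g j) := by
    ext i
    simp only [mem_filter, mem_range]
    have := hN j
    omega
  rw [← card_filter, this, card_range]

lemma antitone_conjSeq_succ (hJ : ∀ j, J ≤ j → g j = 0) : Antitone fun i => conjSeq g (i + 1) :=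
  antitone_nat_of_succ_le fun i => Set.ncard_le_ncard
    (fun k (hk : i + 2 ≤ g k) => (by omega : i + 1 ≤ g k)) (finite_setOf_succ_le hJ i)

noncomputable def Ptn.conj (g : ℕ → ℕ) (hg : Antitone g) (hJ : ∀ j, J ≤ j → g j = 0) : Ptn where
  f i := conjSeq g (i + 1)
  mono i := antitone_conjSeq_succ hJ i.le_succ
  fin := ⟨g 0, fun _ hi => conjSeq_succ_eq_zero hg hi⟩

variable {A : Type*} {p : Ptn} {c : ℕ → List A}

lemma hasShapePi.conjSeq_length (hsh : hasShapePi p c) (i : ℕ) :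
    conjSeq (List.length ∘ c) (i + 1) = p.f i := by
  obtain ⟨J, hJ⟩ := p.fin
  rw [show List.length ∘ c = _ from funext hsh]
  exact conjSeq_conjSeq (antitone_nat_of_succ_le p.mono) hJ i

lemma hasShapePi.antitone_length (hsh : hasShapePi p c) : Antitone (List.length ∘ c) := by
  obtain ⟨J, hJ⟩ := p.fin
  rw [show List.length ∘ c = _ from funext hsh]
  exact antitone_conjSeq_succ hJ

lemma hasShapePi.length_eq_zero (hsh : hasShapePi p c) {k : ℕ} (hk : p.f 0 ≤ k) :
    (c k).length = 0 :=
  hsh k ▸ conjSeq_succ_eq_zero (antitone_nat_of_succ_le p.mono) hk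

end Conjugate

section Relations

variable {A : Type*} [LinearOrder A] {pr : A → Bool} {x y z a : A}

lemma rowRel_trans (hxy : rowRel pr x y) (hyz : rowRel pr y z) : rowRel pr x z := by
  refine ⟨hxy.1.trans hyz.1, fun hxz => hxy.2 (le_antisymm hxy.1 ?_)⟩
  exact hxz ▸ hyz.1

lemma colRel_of_colRel_of_le (hxy : colRel pr x y) (hyz : y ≤ z) : colRel pr x z := by
  refine ⟨hxy.1.trans hyz, fun hxz => hxy.2 (le_antisymm hxy.1 ?_)⟩
  exact hxz ▸ hyz

lemma bumpCond_eq_true_iff : bumpCond pr a x = true ↔ rowRel pr x a := by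
  unfold bumpCond rowRel
  cases hpa : pr a
  · simp only [Bool.false_eq_true, if_false, decide_eq_true_eq]
    exact ⟨fun h => ⟨h, fun hxa => hxa ▸ hpa⟩, And.left⟩
  · simp only [if_true, decide_eq_true_eq]
    refine ⟨fun h => ⟨h.le, fun hxa => absurd hxa h.ne⟩, fun h => lt_of_le_of_ne h.1 ?_⟩
    rintro rfl
    simp [hpa] at h

lemma colRel_of_bumpCond_eq_false (h : bumpCond pr a x = false) : colRel pr a x := by
  unfold bumpCond at h
  cases hpa : pr a
  · simp only [hpa, Bool.false_eq_true, if_false, decide_eq_false_iff_not, not_le] at h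
    exact ⟨h.le, fun hax => absurd hax h.ne⟩
  · simp only [hpa, if_true, decide_eq_false_iff_not, not_lt] at h
    exact ⟨h, fun _ => hpa⟩

end Relations

section Columns

variable {A : Type*} [Inhabited A] {l : List A} {a : A} {i k r : ℕ}

lemma lastIdx_eq_some {pb : A → Bool} (h : lastIdx l pb = some i) :
    i < l.length ∧ pb (l.getD i default) ∧ ∀ k < l.length, pb (l.getD k default) → k ≤ i := by
  obtain ⟨hmem, hmax⟩ := List.max?_eq_some_iff.mp h
  simp only [List.mem_filter, List.mem_range] at hmem
  exact ⟨hmem.1, hmem.2, fun k hk hpk => hmax k (by simpa using ⟨hk, hpk⟩)⟩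

lemma lastIdx_eq_none {pb : A → Bool} (h : lastIdx l pb = none) (hk : k < l.length) :
    pb (l.getD k default) = false := by
  have := List.filter_eq_nil_iff.mp (List.max?_eq_none_iff.mp h) k (List.mem_range.mpr hk)
  simpa using this

lemma bottomGet_sub (hi : i < l.length) : bottomGet l (l.length - 1 - i) = l.getD i default := by
  rw [bottomGet, Nat.sub_sub_self (by omega)]

lemma bottomGet_set (hi : i < l.length) (hr : r < l.length) :
    bottomGet (l.set i a) r = if r = l.length - 1 - i then a else bottomGet l r := by
  unfold bottomGet
  rw [List.length_set, List.getD_eq_getElem _ _ (by simp; omega),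
    List.getD_eq_getElem _ _ (by omega), List.getElem_set]
  congr 1
  apply propext
  omega

lemma bottomGet_cons_of_lt (hr : r < l.length) : bottomGet (a :: l) r = bottomGet l r := by
  rw [bottomGet, bottomGet, List.length_cons,
    show l.length + 1 - 1 - r = l.length - 1 - r + 1 by omega, List.getD_cons_succ]

lemma bottomGet_cons_length : bottomGet (a :: l) l.length = a := by
  simp [bottomGet]

variable [LinearOrder A] {pr : A → Bool}

lemma getD_le_getD (h : l.IsChain (colRel pr)) (hik : i ≤ k) (hk : k < l.length) :
    l.getD i default ≤ l.getD k default := by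
  have hs : l.Pairwise (· ≤ ·) := (h.imp fun _ _ hxy => hxy.1).pairwise
  rw [List.getD_eq_getElem _ _ (hik.trans_lt hk), List.getD_eq_getElem _ _ hk]
  rcases hik.eq_or_lt with rfl | hlt
  · rfl
  · exact List.pairwise_iff_getElem.mp hs _ _ _ _ hlt

lemma isChain_set_of_lastIdx_eq_some (h : l.IsChain (colRel pr))
    (hi : lastIdx l (bumpCond pr a) = some i) : (l.set i a).IsChain (colRel pr) := by
  obtain ⟨hil, hbump, hmax⟩ := lastIdx_eq_some hi
  rw [List.isChain_iff_getElem]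
  intro m hm'
  have hm : m + 1 < l.length := by simpa using hm'
  simp only [List.getElem_set]
  split_ifs with him him' him''
  · omega
  · subst him
    refine colRel_of_bumpCond_eq_false (Bool.eq_false_iff.mpr fun hb => ?_)
    have := hmax (i + 1) hm (by rwa [List.getD_eq_getElem _ _ hm])
    omega
  · subst him''
    rw [List.getD_eq_getElem _ _ hil] at hbump
    exact colRel_of_colRel_of_le (h.getElem m hm) (bumpCond_eq_true_iff.mp hbump).1
  · exact h.getElem m hm

lemma rowRel_getD_of_lastIdx_eq_some (h : l.IsChain (colRel pr))
    (hi : lastIdx l (bumpCond pr a) = some i) (hik : i < k) (hk : k < l.length) :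
    rowRel pr (l.getD i default) (l.getD k default) := by
  obtain ⟨-, hbump, hmax⟩ := lastIdx_eq_some hi
  refine ⟨getD_le_getD h hik.le hk, fun heq => ?_⟩
  have := hmax k hk (heq ▸ hbump)
  omega

lemma not_rowRel_bottomGet_of_lastIdx_eq_none (h : lastIdx l (bumpCond pr a) = none)
    (hr : r < l.length) : ¬rowRel pr (bottomGet l r) a := by
  rw [← bumpCond_eq_true_iff, bottomGet, lastIdx_eq_none h (by omega)]
  exact Bool.false_ne_true

lemma sub_le_of_rowRel_bottomGet (h : lastIdx l (bumpCond pr a) = some i) (hr : r < l.length)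
    (hra : rowRel pr (bottomGet l r) a) : l.length - 1 - i ≤ r := by
  have := (lastIdx_eq_some h).2.2 (l.length - 1 - r) (by omega) (bumpCond_eq_true_iff.mpr hra)
  omega

end Columns

section Insertion

variable {A : Type*} [LinearOrder A] [Inhabited A] {pr : A → Bool} {p : Ptn} {c : ℕ → List A}
  {j i : ℕ} {a : A}

/-- The invariant of reverse column insertion when the letter `a` arrives at column `j`: unless
`j = 0`, `r₀` is the height from which `a` was bumped out of column `j - 1`. -/
def CanInsertAt (pr : A → Bool) (c : ℕ → List A) (j : ℕ) (a : A) : Prop :=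
  ∀ j', j = j' + 1 → ∃ r₀ < (c j').length,
    (∀ r ≤ r₀, rowRel pr a (bottomGet (c j') r)) ∧
    (r₀ < (c j).length → rowRel pr (bottomGet (c j) r₀) a)

lemma IsAntiSSYT.update (hc : IsAntiSSYT pr c) {l : List A} (hl : l.IsChain (colRel pr))
    (hleft : ∀ r, r < (c (j + 1)).length → r < l.length →
      rowRel pr (bottomGet (c (j + 1)) r) (bottomGet l r))
    (hright : ∀ j', j = j' + 1 → ∀ r, r < l.length → r < (c j').length →
      rowRel pr (bottomGet l r) (bottomGet (c j') r)) :
    IsAntiSSYT pr (Function.update c j l) := by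
  refine ⟨fun k => ?_, fun k r hr₁ hr₂ => ?_⟩
  · rcases eq_or_ne k j with rfl | hk
    · rwa [update_self]
    · rw [update_of_ne hk]
      exact hc.1 k
  · by_cases hk₁ : k + 1 = j
    · subst hk₁
      rw [update_self] at hr₁ ⊢
      rw [update_of_ne k.succ_ne_self.symm] at hr₂ ⊢
      exact hright k rfl r hr₁ hr₂
    · rw [update_of_ne hk₁] at hr₁ ⊢
      rcases eq_or_ne k j with rfl | hk
      · rw [update_self] at hr₂ ⊢
        exact hleft r hr₁ hr₂
      · rw [update_of_ne hk] at hr₂ ⊢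
        exact hc.2 k r hr₁ hr₂

lemma CanInsertAt.exists_of_lastIdx_eq_none (hin : CanInsertAt pr c j a)
    (hnone : lastIdx (c j) (bumpCond pr a) = none) {j' : ℕ} (hj : j = j' + 1) :
    ∃ r₀, (c j).length ≤ r₀ ∧ r₀ < (c j').length ∧ ∀ r ≤ r₀, rowRel pr a (bottomGet (c j') r) := by
  obtain ⟨r₀, hr₀, hbelow, hleft⟩ := hin j' hj
  refine ⟨r₀, not_lt.mp fun hlt => ?_, hr₀, hbelow⟩
  exact not_rowRel_bottomGet_of_lastIdx_eq_none hnone hlt (hleft hlt)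

lemma IsAntiSSYT.update_cons (hc : IsAntiSSYT pr c) (hlen : Antitone (List.length ∘ c))
    (hin : CanInsertAt pr c j a) (hnone : lastIdx (c j) (bumpCond pr a) = none) :
    IsAntiSSYT pr (Function.update c j (a :: c j)) := by
  refine hc.update ?_ (fun r hr₁ _ => ?_) (fun j' hj r hr₁ hr₂ => ?_)
  · cases hcj : c j with
    | nil => exact .singleton a
    | cons y t =>
      have hy := lastIdx_eq_none hnone (k := 0) (by simp [hcj])
      have hchain := hc.1 j
      rw [hcj, List.getD_cons_zero] at hy
      rw [hcj] at hchain
      exact .cons_cons (colRel_of_bumpCond_eq_false hy) hchain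
  · have hr : r < (c j).length := hr₁.trans_le (hlen j.le_succ)
    rw [bottomGet_cons_of_lt hr]
    exact hc.2 j r hr₁ hr
  · obtain ⟨r₀, hlen₀, -, hbelow⟩ := hin.exists_of_lastIdx_eq_none hnone hj
    rw [List.length_cons] at hr₁
    rcases (Nat.lt_succ_iff.mp hr₁).lt_or_eq with hr | rfl
    · rw [bottomGet_cons_of_lt hr]
      exact hj ▸ hc.2 j' r (hj ▸ hr) hr₂
    · rw [bottomGet_cons_length]
      exact hbelow _ hlen₀

lemma antitone_length_update_cons (hlen : Antitone (List.length ∘ c)) (hin : CanInsertAt pr c j a)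
    (hnone : lastIdx (c j) (bumpCond pr a) = none) :
    Antitone (List.length ∘ update c j (a :: c j)) := by
  rw [comp_update]
  refine antitone_update_succ hlen fun j' hj => ?_
  obtain ⟨r₀, hlen₀, hr₀, -⟩ := hin.exists_of_lastIdx_eq_none hnone hj
  exact hlen₀.trans_lt hr₀

lemma IsAntiSSYT.update_set (hc : IsAntiSSYT pr c) (hin : CanInsertAt pr c j a)
    (hsome : lastIdx (c j) (bumpCond pr a) = some i) :
    IsAntiSSYT pr (Function.update c j ((c j).set i a)) := by
  obtain ⟨hi, hbump, -⟩ := lastIdx_eq_some hsome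
  have hxa := bumpCond_eq_true_iff.mp hbump
  refine hc.update (isChain_set_of_lastIdx_eq_some (hc.1 j) hsome)
    (fun r hr₁ hr₂ => ?_) (fun j' hj r hr₁ hr₂ => ?_)
  · rw [List.length_set] at hr₂
    rw [bottomGet_set hi hr₂]
    split_ifs with hr
    · subst hr
      have := hc.2 j _ hr₁ hr₂
      rw [bottomGet_sub hi] at this
      exact rowRel_trans this hxa
    · exact hc.2 j r hr₁ hr₂
  · rw [List.length_set] at hr₁
    rw [bottomGet_set hi hr₁]
    split_ifs with hr
    · obtain ⟨r₀, -, hbelow, hleft⟩ := hin j' hj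
      refine hbelow r ?_
      rcases lt_or_ge r₀ (c j).length with hlt | hge
      · exact hr ▸ sub_le_of_rowRel_bottomGet hsome hlt (hleft hlt)
      · omega
    · exact hj ▸ hc.2 j' r (hj ▸ hr₁) hr₂

lemma canInsertAt_update_set (hc : IsAntiSSYT pr c)
    (hsome : lastIdx (c j) (bumpCond pr a) = some i) :
    CanInsertAt pr (update c j ((c j).set i a)) (j + 1) ((c j).getD i default) := by
  obtain ⟨hi, hbump, -⟩ := lastIdx_eq_some hsome
  rintro j' hj
  obtain rfl : j = j' := by omega
  rw [update_self, update_of_ne j.succ_ne_self, List.length_set]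
  refine ⟨(c j).length - 1 - i, by omega, fun r hr => ?_, fun hlt => ?_⟩
  · rw [bottomGet_set hi (by omega)]
    split_ifs with hr'
    · exact bumpCond_eq_true_iff.mp hbump
    · exact rowRel_getD_of_lastIdx_eq_some (hc.1 j) hsome (by omega) (by omega)
  · simpa only [bottomGet_sub hi] using hc.2 j _ hlt (by omega)

theorem insertAux_spec {n : ℕ} (hend : c (j + n) = [])
    (hc : IsAntiSSYT pr c) (hlen : Antitone (List.length ∘ c)) (hin : CanInsertAt pr c j a) :
    ∃ j₀, List.length ∘ insertAux pr (n + 1) c j a =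
        update (List.length ∘ c) j₀ ((List.length ∘ c) j₀ + 1) ∧
      IsAntiSSYT pr (insertAux pr (n + 1) c j a) ∧
      Antitone (List.length ∘ insertAux pr (n + 1) c j a) := by
  induction n generalizing c j a with
  | zero =>
    rw [add_zero] at hend
    have hL : lastIdx (c j) (bumpCond pr a) = none := by simp [lastIdx, hend]
    rw [insertAux, hL]
    exact ⟨j, comp_update _ _ _ _, hc.update_cons hlen hin hL,
      antitone_length_update_cons hlen hin hL⟩
  | succ n ih =>
    rcases hL : lastIdx (c j) (bumpCond pr a) with _ | i
    · rw [insertAux, hL]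
      exact ⟨j, comp_update _ _ _ _, hc.update_cons hlen hin hL,
        antitone_length_update_cons hlen hin hL⟩
    · rw [insertAux, hL]
      have hlen_eq : List.length ∘ update c j ((c j).set i a) = List.length ∘ c := by
        rw [comp_update, List.length_set]
        exact update_eq_self j _
      have hend' : update c j ((c j).set i a) (j + 1 + n) = [] := by
        rwa [update_of_ne (by omega), show j + 1 + n = j + (n + 1) by omega]
      obtain ⟨j₀, hshape, hc', hlen'⟩ := ih hend' (hc.update_set hin hL) (hlen_eq ▸ hlen)
        (canInsertAt_update_set hc hL)
      exact ⟨j₀, hlen_eq ▸ hshape, hc', hlen'⟩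

theorem colInsert_spec (hsh : hasShapePi p c) (hc : IsAntiSSYT pr c) (a : A) :
    ∃ j₀, List.length ∘ colInsert pr p c a =
        update (List.length ∘ c) j₀ ((List.length ∘ c) j₀ + 1) ∧
      IsAntiSSYT pr (colInsert pr p c a) ∧
      Antitone (List.length ∘ colInsert pr p c a) :=
  insertAux_spec (List.length_eq_zero_iff.mp (hsh.length_eq_zero (by omega))) hc
    hsh.antitone_length fun _ h => by omega

end Insertion

/-- reverse column insertion of a letter `a` into an `𝔸`-semistandard tableau
of anti-normal shape `λ^π` produces an `𝔸`-semistandard tableau of anti-normal shape `μ^π`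
for a partition `μ ⊇ λ` with `|μ| = |λ| + 1`. -/
theorem stmt10 {A : Type*} [LinearOrder A] [Inhabited A] (pr : A → Bool)
    (p : Ptn) (c : ℕ → List A) (hsh : hasShapePi p c) (hssyt : IsAntiSSYT pr c) (a : A) :
    ∃ q : Ptn,
      hasShapePi q (colInsert pr p c a) ∧
      IsAntiSSYT pr (colInsert pr p c a) ∧
      (∀ i, p.f i ≤ q.f i) ∧
      ∃ N₀, ∀ N, N₀ ≤ N →
        (∑ i ∈ Finset.range N, q.f i) = (∑ i ∈ Finset.range N, p.f i) + 1 := by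
  obtain ⟨j₀, hM, hssyt', hM_anti⟩ := colInsert_spec hsh hssyt a
  set L := List.length ∘ c
  set M := List.length ∘ colInsert pr p c a
  have hLM : ∀ k, L k ≤ M k := fun k => by
    rw [hM]
    rcases eq_or_ne k j₀ with rfl | hk
    · exact (update_self k _ L).symm ▸ Nat.le_succ _
    · rw [update_of_ne hk]
  have hLzero : ∀ k, max (p.f 0) (j₀ + 1) ≤ k → L k = 0 := fun k hk =>
    hsh.length_eq_zero (le_of_max_le_left hk)
  have hMzero : ∀ k, max (p.f 0) (j₀ + 1) ≤ k → M k = 0 := fun k hk => by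
    rw [hM, update_of_ne (by omega), hLzero k hk]
  refine ⟨Ptn.conj M hM_anti hMzero, fun j => (conjSeq_conjSeq hM_anti hMzero j).symm, hssyt',
    fun i => hsh.conjSeq_length i ▸ conjSeq_le_conjSeq hLM hMzero i, M 0, fun N hN => ?_⟩
  have hMN : ∀ k, M k ≤ N := fun k => (hM_anti k.zero_le).trans hN
  simp only [Ptn.conj, ← hsh.conjSeq_length]
  rw [sum_range_conjSeq hMzero hMN, sum_range_conjSeq hLzero fun k => (hLM k).trans (hMN k), hM,
    Finset.sum_update_add (by simp)]

end AntiNormal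
end

section
/- Let B₁, B₂ be crystals for U_q(gl(m|n)) in the category 𝒪_int, and define ẽ₀, f̃₀ on B₁ ⊗ B₂ by: ẽ₀(b₁⊗b₂) = ẽ₀b₁ ⊗ b₂ and f̃₀(b₁⊗b₂) = f̃₀b₁ ⊗ b₂ if ⟨h₀, wt(b₁)⟩ > 0, and ẽ₀(b₁⊗b₂) = b₁ ⊗ ẽ₀b₂, f̃₀(b₁⊗b₂) = b₁ ⊗ f̃₀b₂ if ⟨h₀, wt(b₁)⟩ = 0 (taking the result to be 0 if either component is 0). Then for all b, b' ∈ B₁ ⊗ B₂ one has f̃₀(b) = b' if and only if ẽ₀(b') = b, provided each B_i satisfies this property, each satisfies ⟨h₀, wt(b)⟩ ≥ 0 for all b, and ẽ₀b = f̃₀b = 0 whenever ⟨h₀, wt(b)⟩ = 0, and provided ẽ₀, f̃₀ change weight by +α₀, −α₀ respectively with ⟨h₀, α₀⟩ = 0. -/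
/-- the tensor product rule for the odd index `0` on crystals in `𝒪_int`.
Here `φᵢ b = ⟨h₀, wt(b)⟩`. Given two such crystals satisfying the seminormality conditions
(`⟨h₀, wt(b)⟩ ≥ 0`, and `ẽ₀ b = f̃₀ b = 0` whenever `⟨h₀, wt(b)⟩ = 0`), the inverse
property (`f̃₀ b = b' ⟺ ẽ₀ b' = b`), and such that `ẽ₀, f̃₀` do not change `⟨h₀, wt(·)⟩`
(since `⟨h₀, α₀⟩ = 0`), the operators defined on `B₁ × B₂` by acting on the first factor
if `⟨h₀, wt(b₁)⟩ > 0` and on the second if `⟨h₀, wt(b₁)⟩ = 0` again satisfy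
`f̃₀ b = b' ⟺ ẽ₀ b' = b`. -/
theorem stmt12 {B₁ B₂ : Type*}
    (e₁ f₁ : B₁ → Option B₁) (e₂ f₂ : B₂ → Option B₂)
    (φ₁ : B₁ → ℤ) (φ₂ : B₂ → ℤ)
    (hpos₁ : ∀ b, 0 ≤ φ₁ b) (hpos₂ : ∀ b, 0 ≤ φ₂ b)
    (hzero₁ : ∀ b, φ₁ b = 0 → e₁ b = none ∧ f₁ b = none)
    (hzero₂ : ∀ b, φ₂ b = 0 → e₂ b = none ∧ f₂ b = none)
    (hinv₁ : ∀ b b', f₁ b = some b' ↔ e₁ b' = some b)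
    (hinv₂ : ∀ b b', f₂ b = some b' ↔ e₂ b' = some b)
    (hwe₁ : ∀ b b', e₁ b = some b' → φ₁ b' = φ₁ b)
    (hwf₁ : ∀ b b', f₁ b = some b' → φ₁ b' = φ₁ b)
    (hwe₂ : ∀ b b', e₂ b = some b' → φ₂ b' = φ₂ b)
    (hwf₂ : ∀ b b', f₂ b = some b' → φ₂ b' = φ₂ b) :
    ∀ p p' : B₁ × B₂,
      (if 0 < φ₁ p.1 then (f₁ p.1).map fun b => (b, p.2)
        else (f₂ p.2).map fun b => (p.1, b)) = some p' ↔
      (if 0 < φ₁ p'.1 then (e₁ p'.1).map fun b => (b, p'.2)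
        else (e₂ p'.2).map fun b => (p'.1, b)) = some p := by
  rintro ⟨b1, b2⟩ ⟨c1, c2⟩
  constructor
  · intro h
    by_cases h1 : 0 < φ₁ b1
    · rw [if_pos h1] at h
      simp only [Option.map_eq_some_iff, Prod.mk.injEq] at h
      obtain ⟨a, ha, rfl, rfl⟩ := h
      have := hwf₁ _ _ ha
      rw [if_pos (this ▸ h1)]
      simp only [Option.map_eq_some_iff, Prod.mk.injEq]
      exact ⟨b1, (hinv₁ _ _).1 ha, by simp, by simp⟩
    · rw [if_neg h1] at h
      simp only [Option.map_eq_some_iff, Prod.mk.injEq] at h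
      obtain ⟨a, ha, rfl, rfl⟩ := h
      rw [if_neg h1]
      simp only [Option.map_eq_some_iff, Prod.mk.injEq]
      exact ⟨b2, (hinv₂ _ _).1 ha, by simp, by simp⟩
  · intro h
    by_cases h1 : 0 < φ₁ c1
    · rw [if_pos h1] at h
      simp only [Option.map_eq_some_iff, Prod.mk.injEq] at h
      obtain ⟨a, ha, rfl, rfl⟩ := h
      have := hwe₁ _ _ ha
      rw [if_pos (this ▸ h1)]
      simp only [Option.map_eq_some_iff, Prod.mk.injEq]
      exact ⟨c1, (hinv₁ _ _).2 ha, by simp, by simp⟩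
    · rw [if_neg h1] at h
      simp only [Option.map_eq_some_iff, Prod.mk.injEq] at h
      obtain ⟨a, ha, rfl, rfl⟩ := h
      rw [if_neg h1]
      simp only [Option.map_eq_some_iff, Prod.mk.injEq]
      exact ⟨c2, (hinv₂ _ _).2 ha, by simp, by simp⟩
end

section
/- Fix positive integers m, n, ℓ and a partition μ with at most m parts and μ_1 ≤ ℓ. On the set 𝒦 = ⨆_{η ⊂ μ} SST_𝔸((ℓ^m)/η) × SST_𝔹(μ/η) × X (X any set), define operators ẽ₀, f̃₀ as follows: for (P,Q,V) ∈ 𝒦, for each k ≥ 1 let a_k, b_k be the topmost entries of the k-th columns (from the right) of P and Q; set σ_k = + if the k-th column of P does not reach the top row used by the minimal even letter, σ_k = − if a_k is the minimal even letter and b_k is the minimal odd letter, σ_k = · otherwise; let k₀ be minimal with σ_{k₀} ≠ ·; if σ_{k₀} = + then f̃₀ adds the minimal even letter atop column k₀ of P and the minimal odd letter atop column k₀ of Q (and ẽ₀ = 0); if σ_{k₀} = − then ẽ₀ removes these two boxes (and f̃₀ = 0); if all σ_k = · then both are 0. Then ẽ₀ and f̃₀ map 𝒦 into 𝒦 ∪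 {0} and are mutually inverse where defined: f̃₀(x) = y ⟺ ẽ₀(y) = x. -/
section Skew

variable {α : Type*} [LinearOrder α]

/-- A semistandard skew tableau with entries in a totally ordered *even* alphabet:
rows weakly increase, columns strictly increase. The shape has rows `i : Fin m` and cells
`lo i ≤ j < hi i`; the filling is normalized to `junk` outside the shape. -/
def EvenSkew (m : ℕ) (lo hi : Fin m → ℕ) (junk : α) (T : Fin m → ℕ → α) : Prop :=
  (∀ (i : Fin m) (j : ℕ), lo i ≤ j → j + 1 < hi i → T i j ≤ T i (j + 1)) ∧
  (∀ (i : Fin m) (h : (i : ℕ) + 1 < m) (j : ℕ),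
      lo i ≤ j → j < hi ⟨(i : ℕ) + 1, h⟩ → T i j < T ⟨(i : ℕ) + 1, h⟩ j) ∧
  (∀ (i : Fin m) (j : ℕ), (j < lo i ∨ hi i ≤ j) → T i j = junk)

/-- A semistandard skew tableau with entries in a totally ordered *odd* alphabet:
rows strictly increase, columns weakly increase. -/
def OddSkew (m : ℕ) (lo hi : Fin m → ℕ) (junk : α) (T : Fin m → ℕ → α) : Prop :=
  (∀ (i : Fin m) (j : ℕ), lo i ≤ j → j + 1 < hi i → T i j < T i (j + 1)) ∧
  (∀ (i : Fin m) (h : (i : ℕ) + 1 < m) (j : ℕ),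
      lo i ≤ j → j < hi ⟨(i : ℕ) + 1, h⟩ → T i j ≤ T ⟨(i : ℕ) + 1, h⟩ j) ∧
  (∀ (i : Fin m) (j : ℕ), (j < lo i ∨ hi i ≤ j) → T i j = junk)

end Skew

variable (m n ℓ : ℕ) [NeZero m] [NeZero n]

/-- An element of `𝒦 = ⨆_{η ⊆ μ} SST_𝔸((ℓ^m)/η) × SST_𝔹(μ/η) × X`: a partition `η ⊆ μ`, a
pair of semistandard tableaux `P ∈ SST_𝔸((ℓ^m)/η)` and `Q ∈ SST_𝔹(μ/η)` (with the even
`m`-letter alphabet `Fin m` and the odd `n`-letter alphabet `Fin n`), and `V ∈ X`. -/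
structure KElt (μ : Fin m → ℕ) (X : Type*) where
  eta : Fin m → ℕ
  eta_anti : ∀ i j : Fin m, i ≤ j → eta j ≤ eta i
  eta_le : ∀ i, eta i ≤ μ i
  P : Fin m → ℕ → Fin m
  Q : Fin m → ℕ → Fin n
  hP : EvenSkew m eta (fun _ => ℓ) 0 P
  hQ : OddSkew m eta μ 0 Q
  v : X

variable {μ : Fin m → ℕ} {X : Type*}

/-- The top row of the column `c` of the skew shape `(ℓ^m)/η` (if that column is
nonempty). -/
def topRow? (eta : Fin m → ℕ) (c : ℕ) : Option (Fin m) :=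
  if h : (Finset.univ.filter fun i : Fin m => eta i ≤ c).Nonempty then
    some ((Finset.univ.filter fun i : Fin m => eta i ≤ c).min' h)
  else none

/-- `σ_c = +` : the column `c` of `P` is empty, or its top entry exceeds the minimal even
letter. -/
def plusAt (x : KElt m n ℓ μ X) (c : ℕ) : Prop :=
  topRow? m x.eta c = none ∨
    ∃ i0 : Fin m, topRow? m x.eta c = some i0 ∧ (0 : Fin m) < x.P i0 c

/-- `σ_c = −` : the top entry of column `c` of `P` is the minimal even letter and the top
entry of column `c` of `Q` is the minimal odd letter. -/
def minusAt (x : KElt m n ℓ μ X) (c : ℕ) : Prop :=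
  ∃ i0 : Fin m, topRow? m x.eta c = some i0 ∧ x.P i0 c = 0 ∧ c < μ i0 ∧ x.Q i0 c = 0

/-- `σ_c = ·` : neither of the above. -/
def dotAt (x : KElt m n ℓ μ X) (c : ℕ) : Prop :=
  ¬ plusAt m n ℓ x c ∧ ¬ minusAt m n ℓ x c

/-- The relation `f̃₀ x = y`: scanning the columns from the right, at the first column `c`
with `σ_c ≠ ·` we have `σ_c = +`, and `y` is obtained from `x` by adding a box containing
the minimal even letter atop column `c` of `P` and a box containing the minimal odd letter
atop column `c` of `Q` (i.e. removing the corner cell `(r, c)` from `η`). -/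
def FRel (x y : KElt m n ℓ μ X) : Prop :=
  y.v = x.v ∧
  ∃ c, c < ℓ ∧ plusAt m n ℓ x c ∧ (∀ c', c < c' → c' < ℓ → dotAt m n ℓ x c') ∧
    ∃ r : Fin m, x.eta r = c + 1 ∧ y.eta = Function.update x.eta r c ∧
      y.P r c = 0 ∧ (∀ (i : Fin m) (j : ℕ), ¬(i = r ∧ j = c) → y.P i j = x.P i j) ∧
      y.Q r c = 0 ∧ (∀ (i : Fin m) (j : ℕ), ¬(i = r ∧ j = c) → y.Q i j = x.Q i j)

/-- The relation `ẽ₀ x = y`: scanning the columns from the right, at the first column `c`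
with `σ_c ≠ ·` we have `σ_c = −`, and `y` is obtained from `x` by removing the two top
boxes (containing the minimal even and odd letters) of column `c` of `P` and of `Q`. -/
def ERel (x y : KElt m n ℓ μ X) : Prop :=
  y.v = x.v ∧
  ∃ c, c < ℓ ∧ minusAt m n ℓ x c ∧ (∀ c', c < c' → c' < ℓ → dotAt m n ℓ x c') ∧
    ∃ r : Fin m, topRow? m x.eta c = some r ∧ x.eta r = c ∧
      x.P r c = 0 ∧ x.Q r c = 0 ∧ y.eta = Function.update x.eta r (c + 1) ∧
      (∀ (i : Fin m) (j : ℕ), ¬(i = r ∧ j = c) → y.P i j = x.P i j) ∧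
      (∀ (i : Fin m) (j : ℕ), ¬(i = r ∧ j = c) → y.Q i j = x.Q i j)

/-!
The scan pins down the shape near column `c`. Entries of `P` in row `i` are at most `i`
(strictly increasing columns in `Fin m`), so if `σ_c = +` the row `r` just above column `c`
of `P` exists, and it ends exactly at column `c + 1`: otherwise column `c + 1` would have the
same top cell and sign `+` too. The cell `(r, c)` can then be filled with the minimal letters:
`P` stays column-strict because the entry below is positive, and `Q` stays row-strict because
column `c + 1` has sign `·`, so its top entry of `Q` is nonzero and propagates down weakly.
If `σ_c = −`, strictness of the rows of `Q` makes `(r, c)` the first cell of its row, so it can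
be removed. Both moves change column `c` only, hence leave all other signs and the scan
unchanged; this gives the uniqueness and makes the two moves inverse to each other.
-/

section SkewFilling

variable {α : Type*} {R C : α → α → Prop} {m : ℕ} {lo hi : Fin m → ℕ} {junk : α}
  {T : Fin m → ℕ → α}

/-- The common shape of `EvenSkew` and `OddSkew`, with row relation `R` and column
relation `C`. -/
def SkewFilling (R C : α → α → Prop) (m : ℕ) (lo hi : Fin m → ℕ) (junk : α)
    (T : Fin m → ℕ → α) : Prop :=
  (∀ (i : Fin m) (j : ℕ), lo i ≤ j → j + 1 < hi i → R (T i j) (T i (j + 1))) ∧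
  (∀ (i : Fin m) (h : (i : ℕ) + 1 < m) (j : ℕ),
      lo i ≤ j → j < hi ⟨(i : ℕ) + 1, h⟩ → C (T i j) (T ⟨(i : ℕ) + 1, h⟩ j)) ∧
  (∀ (i : Fin m) (j : ℕ), (j < lo i ∨ hi i ≤ j) → T i j = junk)

theorem evenSkew_iff_skewFilling [LinearOrder α] :
    EvenSkew m lo hi junk T ↔ SkewFilling (· ≤ ·) (· < ·) m lo hi junk T :=
  Iff.rfl

theorem oddSkew_iff_skewFilling [LinearOrder α] :
    OddSkew m lo hi junk T ↔ SkewFilling (· < ·) (· ≤ ·) m lo hi junk T :=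
  Iff.rfl

namespace SkewFilling

theorem rel_of_lt [IsTrans α C] (hT : SkewFilling R C m lo hi junk T) (hlo : Antitone lo)
    (hhi : Antitone hi) {i k : Fin m} (hik : i < k) {j : ℕ} (hj : lo i ≤ j)
    (hjk : j < hi k) : C (T i j) (T k j) := by
  suffices ∀ k, (i : ℕ) + 1 ≤ k → ∀ hk : k < m, j < hi ⟨k, hk⟩ → C (T i j) (T ⟨k, hk⟩ j) from
    this k hik k.isLt hjk
  intro k hik
  induction k, hik using Nat.le_induction with
  | base => exact fun hk => hT.2.1 i hk j hj
  | succ k hik ih =>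
    intro hk hjk
    have hlo_k : lo ⟨k, by omega⟩ ≤ j := (hlo (Fin.le_def.2 (by simp only; omega))).trans hj
    have hj_k : j < hi ⟨k, by omega⟩ := hjk.trans_le (hhi (Fin.le_def.2 (by simp)))
    exact _root_.trans (ih _ hj_k) (hT.2.1 ⟨k, by omega⟩ hk j hlo_k hjk)

theorem remove_cell (hT : SkewFilling R C m lo hi junk T) {r : Fin m}
    {c : ℕ} (hr : lo r = c) (hjunk : T r c = junk) :
    SkewFilling R C m (Function.update lo r (c + 1)) hi junk T := by
  have hlo : ∀ i, lo i ≤ Function.update lo r (c + 1) i := fun i => by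
    rcases eq_or_ne i r with rfl | hir
    · rw [Function.update_self]; omega
    · rw [Function.update_of_ne hir]
  refine ⟨fun i j hj => hT.1 i j ((hlo i).trans hj),
    fun i h j hj => hT.2.1 i h j ((hlo i).trans hj), fun i j hj => ?_⟩
  rcases hj with hj | hj
  · rcases eq_or_ne i r with rfl | hir
    · rw [Function.update_self] at hj
      rcases (Nat.lt_succ_iff.1 hj).lt_or_eq with hj | rfl
      · exact hT.2.2 i j (Or.inl (hr ▸ hj))
      · exact hjunk
    · rw [Function.update_of_ne hir] at hj
      exact hT.2.2 i j (Or.inl hj)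
  · exact hT.2.2 i j (Or.inr hj)

theorem add_cell (hT : SkewFilling R C m lo hi junk T) (hlo : Antitone lo) {r : Fin m}
    {c : ℕ} {a : α} (hr : lo r = c + 1) (hc : c < hi r)
    (hrow : c + 1 < hi r → R a (T r (c + 1)))
    (hcol : ∀ h : (r : ℕ) + 1 < m, c < hi ⟨(r : ℕ) + 1, h⟩ → C a (T ⟨(r : ℕ) + 1, h⟩ c)) :
    SkewFilling R C m (Function.update lo r c) hi junk
      (fun i j => if i = r ∧ j = c then a else T i j) := by
  have hlo' : ∀ i, i ≠ r → Function.update lo r c i = lo i := fun i hi =>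
    Function.update_of_ne hi _ _
  refine ⟨fun i j hj hji => ?_, fun i h j hj hji => ?_, fun i j hj => ?_⟩
  · rcases eq_or_ne i r with rfl | hir
    · rw [Function.update_self] at hj
      rcases eq_or_ne j c with rfl | hjc
      · simpa using hrow hji
      · simpa [hjc, show j + 1 ≠ c by omega] using hT.1 i j (by omega) hji
    · simpa [hir] using hT.1 i j (hlo' i hir ▸ hj) hji
  · rcases eq_or_ne i r with rfl | hir
    · rw [Function.update_self] at hj
      have hsucc : (⟨(i : ℕ) + 1, h⟩ : Fin m) ≠ i := Fin.ne_of_val_ne (by simp)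
      rcases eq_or_ne j c with rfl | hjc
      · simpa [hsucc] using hcol h hji
      · simpa [hjc] using hT.2.1 i h j (by omega) hji
    · rw [hlo' i hir] at hj
      have hcell : ¬((⟨(i : ℕ) + 1, h⟩ : Fin m) = r ∧ j = c) := by
        rintro ⟨rfl, rfl⟩
        have := hlo (show i ≤ ⟨(i : ℕ) + 1, h⟩ from Fin.le_def.2 (Nat.le_succ _))
        omega
      simpa [hir, hcell] using hT.2.1 i h j hj hji
  · by_cases hcell : i = r ∧ j = c
    · obtain ⟨rfl, rfl⟩ := hcell
      rw [Function.update_self] at hj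
      omega
    · dsimp only
      rw [if_neg hcell]
      refine hT.2.2 i j (hj.imp_left fun hj => ?_)
      rcases eq_or_ne i r with rfl | hir
      · rw [Function.update_self] at hj; omega
      · rwa [hlo' i hir] at hj

end SkewFilling

end SkewFilling

theorem Fin.le_of_strictMonoOn_Ici {n : ℕ} {f : Fin n → Fin n} {i : Fin n}
    (hf : StrictMonoOn f (Set.Ici i)) : f i ≤ i := by
  have hcard : (Finset.Ici i).card ≤ (Finset.Ici (f i)).card := by
    refine Finset.card_le_card_of_injOn f (fun k hk => ?_) ?_
    · simp only [Finset.coe_Ici, Set.mem_Ici] at hk ⊢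
      exact hf.monotoneOn Set.self_mem_Ici hk hk
    · simpa only [Finset.coe_Ici] using hf.injOn
  rw [Fin.card_Ici, Fin.card_Ici] at hcard
  have := (f i).isLt
  exact Fin.le_def.2 (by omega)

theorem Antitone.update {ι β : Type*} [PartialOrder ι] [Preorder β] [DecidableEq ι]
    {f : ι → β} (hf : Antitone f) {r : ι} {a : β} (hbefore : ∀ i, i < r → a ≤ f i)
    (hafter : ∀ i, r < i → f i ≤ a) : Antitone (Function.update f r a) := by
  intro i j hij
  rcases eq_or_ne i r with rfl | hir <;> rcases eq_or_ne j i with rfl | hji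
  · exact le_rfl
  · rw [Function.update_self, Function.update_of_ne hji]
    exact hafter j (hij.lt_of_ne hji.symm)
  · exact le_rfl
  · rcases eq_or_ne j r with rfl | hjr
    · rw [Function.update_self, Function.update_of_ne hir]
      exact hbefore i (hij.lt_of_ne hir)
    · rw [Function.update_of_ne hir, Function.update_of_ne hjr]
      exact hf hij

theorem le_of_antitone_update {ι β : Type*} [LinearOrder ι] [Preorder β] [DecidableEq ι]
    {f : ι → β} {r r' : ι} {a : β} (hf : Antitone (Function.update f r a)) (hr' : a < f r') :
    r' ≤ r := by
  by_contra! h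
  have := hf h.le
  rw [Function.update_self, Function.update_of_ne h.ne'] at this
  exact this.not_gt hr'

theorem eq_of_eq_off_cell {α : Type*} {m : ℕ} {f g : Fin m → ℕ → α} {r : Fin m} {c : ℕ}
    (hrc : f r c = g r c) (hoff : ∀ i j, ¬(i = r ∧ j = c) → f i j = g i j) : f = g := by
  funext i j
  by_cases h : i = r ∧ j = c
  · obtain ⟨rfl, rfl⟩ := h
    exact hrc
  · exact hoff i j h

section TopRow

variable {m : ℕ} {eta eta' : Fin m → ℕ} {c c' : ℕ}

theorem topRow?_eq_none_iff : topRow? m eta c = none ↔ ∀ i, c < eta i := by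
  unfold topRow?
  split_ifs with h
  · simpa [Finset.Nonempty] using h
  · simpa [Finset.Nonempty] using h

theorem topRow?_eq_some_iff {i₀ : Fin m} :
    topRow? m eta c = some i₀ ↔ IsLeast {i | eta i ≤ c} i₀ := by
  have hS : ((Finset.univ.filter fun i : Fin m => eta i ≤ c : Finset (Fin m)) : Set (Fin m)) =
      {i | eta i ≤ c} := by
    ext; simp
  unfold topRow?
  split_ifs with h
  · rw [Option.some_inj]
    have hmin := hS ▸ Finset.isLeast_min' _ h
    exact ⟨fun h => h ▸ hmin, hmin.unique⟩
  · simp only [false_iff]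
    exact fun hi => h ⟨i₀, by simpa using hi.1⟩

theorem topRow?_congr (h : ∀ i, eta i ≤ c ↔ eta' i ≤ c') :
    topRow? m eta c = topRow? m eta' c' := by
  unfold topRow?
  simp only [h]

end TopRow

attribute [ext] KElt

namespace KElt

variable {m n ℓ : ℕ} [NeZero m] [NeZero n] {μ : Fin m → ℕ} {X : Type*}

theorem eta_antitone (x : KElt m n ℓ μ X) : Antitone x.eta :=
  fun i j h => x.eta_anti i j h

theorem P_le_row (x : KElt m n ℓ μ X) {i : Fin m} {c : ℕ} (hi : x.eta i ≤ c) (hc : c < ℓ) :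
    x.P i c ≤ i :=
  Fin.le_of_strictMonoOn_Ici (f := fun k => x.P k c) fun _ hk _ _ hkk' =>
    (evenSkew_iff_skewFilling.1 x.hP).rel_of_lt x.eta_antitone antitone_const hkk'
      ((x.eta_antitone hk).trans hi) hc

theorem plusAt_succ {x : KElt m n ℓ μ X} {c : ℕ} (hc : c + 1 < ℓ)
    (htop : topRow? m x.eta (c + 1) = topRow? m x.eta c) (h : plusAt m n ℓ x c) :
    plusAt m n ℓ x (c + 1) := by
  rw [plusAt, htop]
  refine h.imp_right fun ⟨i₀, hi₀, hpos⟩ => ⟨i₀, hi₀, hpos.trans_le ?_⟩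
  exact x.hP.1 i₀ c (topRow?_eq_some_iff.1 hi₀).1 hc

theorem P_eq_zero_of_not_plusAt {x : KElt m n ℓ μ X} {c : ℕ} {i₀ : Fin m}
    (h : ¬plusAt m n ℓ x c) (hi₀ : topRow? m x.eta c = some i₀) : x.P i₀ c = 0 := by
  by_contra hne
  exact h (Or.inr ⟨i₀, hi₀, (Fin.pos_iff_ne_zero' _).2 hne⟩)

theorem dotAt_congr {x y : KElt m n ℓ μ X} {c : ℕ}
    (htop : topRow? m x.eta c = topRow? m y.eta c)
    (hP : ∀ i, x.P i c = y.P i c) (hQ : ∀ i, x.Q i c = y.Q i c) :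
    dotAt m n ℓ x c ↔ dotAt m n ℓ y c := by
  simp only [dotAt, plusAt, minusAt, htop, hP, hQ]

theorem dotAt_iff_of_eq_off_cell {x y : KElt m n ℓ μ X} {r : Fin m} {c c' : ℕ} (hc' : c' ≠ c)
    (hxr : x.eta r = c + 1) (hy : y.eta = Function.update x.eta r c)
    (hP : ∀ i j, ¬(i = r ∧ j = c) → y.P i j = x.P i j)
    (hQ : ∀ i j, ¬(i = r ∧ j = c) → y.Q i j = x.Q i j) :
    dotAt m n ℓ y c' ↔ dotAt m n ℓ x c' := by
  refine dotAt_congr (topRow?_congr fun i => ?_) (fun i => hP i c' (hc' ·.2))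
    (fun i => hQ i c' (hc' ·.2))
  rw [hy]
  rcases eq_or_ne i r with rfl | hir
  · rw [Function.update_self, hxr]
    omega
  · rw [Function.update_of_ne hir]

theorem eq_of_not_dotAt {x : KElt m n ℓ μ X} {c c' : ℕ} (hc : c < ℓ) (hc' : c' < ℓ)
    (h : ¬dotAt m n ℓ x c) (h' : ¬dotAt m n ℓ x c')
    (hdot : ∀ d, c < d → d < ℓ → dotAt m n ℓ x d)
    (hdot' : ∀ d, c' < d → d < ℓ → dotAt m n ℓ x d) : c = c' := by
  by_contra hne
  rcases Nat.lt_or_gt_of_ne hne with hlt | hlt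
  · exact h' (hdot c' hlt hc')
  · exact h (hdot' c hlt hc)

theorem exists_corner (hμl : ∀ i, μ i ≤ ℓ) {x : KElt m n ℓ μ X} {c : ℕ} (hc : c < ℓ)
    (hplus : plusAt m n ℓ x c) (hdot : ∀ c', c < c' → c' < ℓ → dotAt m n ℓ x c') :
    ∃ r : Fin m, x.eta r = c + 1 ∧ (∀ i, r < i → x.eta i ≤ c) ∧
      ∀ h : (r : ℕ) + 1 < m, x.P ⟨(r : ℕ) + 1, h⟩ c ≠ 0 := by
  obtain ⟨r, hr, hbelow, hnext⟩ : ∃ r : Fin m, c < x.eta r ∧ (∀ i, r < i → x.eta i ≤ c) ∧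
      ∀ h : (r : ℕ) + 1 < m, x.P ⟨(r : ℕ) + 1, h⟩ c ≠ 0 := by
    have hm := NeZero.pos m
    rcases hplus with hnone | ⟨i₀, hi₀, hpos⟩
    · refine ⟨⟨m - 1, by omega⟩, topRow?_eq_none_iff.1 hnone _, fun i hi => ?_, fun h => ?_⟩
      · exact absurd (Fin.lt_def.1 hi) (by simp only; omega)
      · simp only at h
        omega
    · obtain ⟨hi₀c, hi₀min⟩ := topRow?_eq_some_iff.1 hi₀
      -- the top entry of column `c` is positive, so `c` does not reach the top row
      have hi₀pos : 0 < (i₀ : ℕ) := Fin.lt_def.1 (hpos.trans_le (x.P_le_row hi₀c hc))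
      refine ⟨⟨i₀ - 1, by omega⟩, lt_of_not_ge fun h => ?_, fun i hi => ?_, fun h => ?_⟩
      · exact absurd (Fin.le_def.1 (hi₀min h)) (by simp only; omega)
      · have hi : i₀ ≤ i := Fin.le_def.2 (by have := Fin.lt_def.1 hi; simp only at this; omega)
        exact (x.eta_antitone hi).trans hi₀c
      · convert hpos.ne' using 2
        exact Fin.ext (by simp only; omega)
  refine ⟨r, le_antisymm (not_lt.1 fun hgt => ?_) hr, hbelow, hnext⟩
  have hc1 : c + 1 < ℓ := hgt.trans_le ((x.eta_le r).trans (hμl r))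
  -- otherwise column `c + 1` has the same top row as column `c`, hence sign `+` as well
  have htop : topRow? m x.eta (c + 1) = topRow? m x.eta c := topRow?_congr fun i => by
    rcases le_or_gt i r with hir | hir
    · have := x.eta_antitone hir
      omega
    · have := hbelow i hir
      omega
  exact (hdot (c + 1) c.lt_succ_self hc1).1 (plusAt_succ hc1 htop hplus)

theorem Q_ne_zero (hμa : Antitone μ) {x : KElt m n ℓ μ X} {c : ℕ} {r : Fin m}
    (hr : x.eta r ≤ c + 1) (hμr : c + 1 < μ r) (hdot : dotAt m n ℓ x (c + 1)) :
    x.Q r (c + 1) ≠ 0 := by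
  obtain ⟨i₀, hi₀⟩ := Option.ne_none_iff_exists'.1 fun h =>
    (topRow?_eq_none_iff.1 h r).not_ge hr
  obtain ⟨hi₀c, hi₀min⟩ := topRow?_eq_some_iff.1 hi₀
  have hi₀r : i₀ ≤ r := hi₀min hr
  have hP0 : x.P i₀ (c + 1) = 0 := P_eq_zero_of_not_plusAt hdot.1 hi₀
  have hQ0 : x.Q i₀ (c + 1) ≠ 0 := fun h => hdot.2 ⟨i₀, hi₀, hP0, hμr.trans_le (hμa hi₀r), h⟩
  have hle : x.Q i₀ (c + 1) ≤ x.Q r (c + 1) := by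
    rcases hi₀r.lt_or_eq with hlt | rfl
    · exact (oddSkew_iff_skewFilling.1 x.hQ).rel_of_lt x.eta_antitone hμa hlt hi₀c hμr
    · exact le_rfl
  exact fun h => hQ0 (nonpos_iff_eq_zero.1 (h ▸ hle))

theorem exists_fRel (hμa : Antitone μ) (hμl : ∀ i, μ i ≤ ℓ) {x : KElt m n ℓ μ X} {c : ℕ}
    (hc : c < ℓ) (hplus : plusAt m n ℓ x c)
    (hdot : ∀ c', c < c' → c' < ℓ → dotAt m n ℓ x c') : ∃ y, FRel m n ℓ x y := by
  obtain ⟨r, hr, hbelow, hnext⟩ := exists_corner hμl hc hplus hdot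
  have hrμ : c + 1 ≤ μ r := hr ▸ x.eta_le r
  have hQnext : c + 1 < μ r → x.Q r (c + 1) ≠ 0 := fun hμr =>
    Q_ne_zero hμa hr.le hμr (hdot _ c.lt_succ_self (hμr.trans_le (hμl r)))
  let y : KElt m n ℓ μ X :=
    { eta := Function.update x.eta r c
      eta_anti := x.eta_antitone.update (fun i hi => by have := x.eta_antitone hi.le; omega)
        hbelow
      eta_le := fun i => by
        rcases eq_or_ne i r with rfl | hir
        · rw [Function.update_self]; omega
        · rw [Function.update_of_ne hir]; exact x.eta_le i
      P := fun i j => if i = r ∧ j = c then 0 else x.P i j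
      Q := fun i j => if i = r ∧ j = c then 0 else x.Q i j
      hP := (evenSkew_iff_skewFilling.1 x.hP).add_cell x.eta_antitone hr hc
        (fun _ => Fin.zero_le _) fun h _ => (Fin.pos_iff_ne_zero' _).2 (hnext h)
      hQ := (oddSkew_iff_skewFilling.1 x.hQ).add_cell x.eta_antitone hr hrμ
        (fun h => (Fin.pos_iff_ne_zero' _).2 (hQnext h)) fun _ _ => Fin.zero_le _
      v := x.v }
  exact ⟨y, rfl, c, hc, hplus, hdot, r, hr, rfl, if_pos ⟨rfl, rfl⟩, fun _ _ h => if_neg h,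
    if_pos ⟨rfl, rfl⟩, fun _ _ h => if_neg h⟩

theorem exists_eRel {x : KElt m n ℓ μ X} {c : ℕ} (hc : c < ℓ) (hminus : minusAt m n ℓ x c)
    (hdot : ∀ c', c < c' → c' < ℓ → dotAt m n ℓ x c') : ∃ y, ERel m n ℓ x y := by
  obtain ⟨r, hr, hP0, hμr, hQ0⟩ := id hminus
  obtain ⟨hrc, hrmin⟩ := topRow?_eq_some_iff.1 hr
  -- rows of `Q` increase strictly, so the entry `0` must be the first one of its row
  have hreta : x.eta r = c := by
    refine le_antisymm hrc (not_lt.1 fun hlt => ?_)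
    have := x.hQ.1 r (c - 1) (by omega) (by omega)
    rw [Nat.sub_add_cancel (by omega), hQ0] at this
    exact Fin.not_lt_zero _ this
  let y : KElt m n ℓ μ X :=
    { eta := Function.update x.eta r (c + 1)
      eta_anti := x.eta_antitone.update
        (fun i hi => Nat.succ_le_of_lt (lt_of_not_ge fun h => hi.not_ge (hrmin h)))
        fun i hi => (x.eta_antitone hi.le).trans (hreta ▸ c.le_succ)
      eta_le := fun i => by
        rcases eq_or_ne i r with rfl | hir
        · rw [Function.update_self]; omega
        · rw [Function.update_of_ne hir]; exact x.eta_le i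
      P := x.P
      Q := x.Q
      hP := (evenSkew_iff_skewFilling.1 x.hP).remove_cell hreta hP0
      hQ := (oddSkew_iff_skewFilling.1 x.hQ).remove_cell hreta hQ0
      v := x.v }
  exact ⟨y, rfl, c, hc, hminus, hdot, r, hr, hreta, hP0, hQ0, rfl, fun _ _ _ => rfl,
    fun _ _ _ => rfl⟩

theorem fRel_unique {x y y' : KElt m n ℓ μ X} (h : FRel m n ℓ x y) (h' : FRel m n ℓ x y') :
    y = y' := by
  obtain ⟨hv, c, hc, hplus, hdot, r, hr, heta, hP, hPoff, hQ, hQoff⟩ := h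
  obtain ⟨hv', c', hc', hplus', hdot', r', hr', heta', hP', hPoff', hQ', hQoff'⟩ := h'
  obtain rfl : c = c' := eq_of_not_dotAt hc hc' (·.1 hplus) (·.1 hplus') hdot hdot'
  -- `r` is the last row with `η r = c + 1`, since the new `η` is still antitone
  obtain rfl : r = r' := le_antisymm
    (le_of_antitone_update (heta' ▸ y'.eta_antitone) (hr ▸ c.lt_succ_self))
    (le_of_antitone_update (heta ▸ y.eta_antitone) (hr' ▸ c.lt_succ_self))
  ext1
  · rw [heta, heta']
  · exact eq_of_eq_off_cell (hP.trans hP'.symm) fun i j h =>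
      (hPoff i j h).trans (hPoff' i j h).symm
  · exact eq_of_eq_off_cell (hQ.trans hQ'.symm) fun i j h =>
      (hQoff i j h).trans (hQoff' i j h).symm
  · rw [hv, hv']

theorem eRel_unique {x y y' : KElt m n ℓ μ X} (h : ERel m n ℓ x y) (h' : ERel m n ℓ x y') :
    y = y' := by
  obtain ⟨hv, c, hc, hminus, hdot, r, hr, -, -, -, heta, hPoff, hQoff⟩ := h
  obtain ⟨hv', c', hc', hminus', hdot', r', hr', -, -, -, heta', hPoff', hQoff'⟩ := h'
  obtain rfl : c = c' := eq_of_not_dotAt hc hc' (·.2 hminus) (·.2 hminus') hdot hdot'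
  obtain rfl : r = r' := Option.some_injective _ (hr.symm.trans hr')
  -- the cell `(r, c)` lies outside both shapes, where the fillings are `0`
  have hout : ∀ z : KElt m n ℓ μ X, z.eta = Function.update x.eta r (c + 1) →
      z.P r c = 0 ∧ z.Q r c = 0 := fun z hz => by
    have hlt : c < z.eta r := by rw [hz, Function.update_self]; omega
    exact ⟨z.hP.2.2 r c (Or.inl hlt), z.hQ.2.2 r c (Or.inl hlt)⟩
  obtain ⟨hP, hQ⟩ := hout y heta
  obtain ⟨hP', hQ'⟩ := hout y' heta'
  ext1
  · rw [heta, heta']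
  · exact eq_of_eq_off_cell (hP.trans hP'.symm) fun i j h =>
      (hPoff i j h).trans (hPoff' i j h).symm
  · exact eq_of_eq_off_cell (hQ.trans hQ'.symm) fun i j h =>
      (hQoff i j h).trans (hQoff' i j h).symm
  · rw [hv, hv']

theorem eRel_of_fRel {x y : KElt m n ℓ μ X} (h : FRel m n ℓ x y) : ERel m n ℓ y x := by
  obtain ⟨hv, c, hc, -, hdot, r, hr, heta, hP, hPoff, hQ, hQoff⟩ := h
  have hyr : y.eta r = c := by rw [heta, Function.update_self]
  have htop : topRow? m y.eta c = some r := by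
    refine topRow?_eq_some_iff.2 ⟨hyr.le, fun i hi => not_lt.1 fun hir => ?_⟩
    change y.eta i ≤ c at hi
    rw [heta, Function.update_of_ne hir.ne] at hi
    have := x.eta_antitone hir.le
    omega
  refine ⟨hv.symm, c, hc, ⟨r, htop, hP, by have := x.eta_le r; omega, hQ⟩,
    fun c' hcc' hc' =>
      (dotAt_iff_of_eq_off_cell hcc'.ne' hr heta hPoff hQoff).2 (hdot c' hcc' hc'),
    r, htop, hyr, hP, hQ, ?_, fun i j h => (hPoff i j h).symm, fun i j h => (hQoff i j h).symm⟩
  rw [heta, Function.update_idem, ← hr, Function.update_eq_self]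

theorem fRel_of_eRel {x y : KElt m n ℓ μ X} (h : ERel m n ℓ y x) : FRel m n ℓ x y := by
  obtain ⟨hv, c, hc, -, hdot, r, htop, hyr, hP, hQ, heta, hPoff, hQoff⟩ := h
  obtain ⟨-, hrmin⟩ := topRow?_eq_some_iff.1 htop
  have hxr : x.eta r = c + 1 := by rw [heta, Function.update_self]
  have hy : y.eta = Function.update x.eta r c := by
    rw [heta, Function.update_idem, ← hyr, Function.update_eq_self]
  have hrows : ∀ i, x.eta i ≤ c ↔ r < i := fun i => by
    rcases lt_trichotomy i r with hir | rfl | hir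
    · rw [heta, Function.update_of_ne hir.ne]
      exact iff_of_false (fun h => hir.not_ge (hrmin h)) hir.not_gt
    · omega
    · rw [heta, Function.update_of_ne hir.ne']
      exact iff_of_true ((y.eta_antitone hir.le).trans hyr.le) hir
  -- column `c` of `x` starts in row `r + 1`, where `P` exceeds the entry `0` above it
  have hplus : plusAt m n ℓ x c := by
    by_cases hrm : (r : ℕ) + 1 < m
    · have hsucc : (⟨(r : ℕ) + 1, hrm⟩ : Fin m) ≠ r := Fin.ne_of_val_ne (by simp)
      refine Or.inr ⟨⟨(r : ℕ) + 1, hrm⟩, topRow?_eq_some_iff.2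
        ⟨(hrows _).2 (Fin.lt_def.2 (by simp)),
          fun i hi => Fin.le_def.2 (Fin.lt_def.1 ((hrows i).1 hi))⟩, ?_⟩
      rw [hPoff _ c fun h => hsucc h.1, ← hP]
      exact y.hP.2.1 r hrm c hyr.le hc
    · exact Or.inl (topRow?_eq_none_iff.2 fun i =>
        lt_of_not_ge fun hi => hrm (by have := Fin.lt_def.1 ((hrows i).1 hi); omega))
  have hyP : ∀ i j, ¬(i = r ∧ j = c) → y.P i j = x.P i j := fun i j h => (hPoff i j h).symm
  have hyQ : ∀ i j, ¬(i = r ∧ j = c) → y.Q i j = x.Q i j := fun i j h => (hQoff i j h).symm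
  exact ⟨hv.symm, c, hc, hplus,
    fun c' hcc' hc' =>
      (dotAt_iff_of_eq_off_cell hcc'.ne' hxr hy hyP hyQ).1 (hdot c' hcc' hc'),
    r, hxr, hy, hP, hyP, hQ, hyQ⟩

end KElt

theorem stmt19_general (m n ℓ : ℕ) [NeZero m] [NeZero n]
    (μ : Fin m → ℕ) (hμa : ∀ i j : Fin m, i ≤ j → μ j ≤ μ i) (hμl : ∀ i, μ i ≤ ℓ)
    (X : Type*) :
    (∀ (x : KElt m n ℓ μ X) (c : ℕ), c < ℓ → plusAt m n ℓ x c →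
      (∀ c', c < c' → c' < ℓ → dotAt m n ℓ x c') → ∃ y, FRel m n ℓ x y) ∧
    (∀ (x : KElt m n ℓ μ X) (c : ℕ), c < ℓ → minusAt m n ℓ x c →
      (∀ c', c < c' → c' < ℓ → dotAt m n ℓ x c') → ∃ y, ERel m n ℓ x y) ∧
    (∀ x y y' : KElt m n ℓ μ X, FRel m n ℓ x y → FRel m n ℓ x y' → y = y') ∧
    (∀ x y y' : KElt m n ℓ μ X, ERel m n ℓ x y → ERel m n ℓ x y' → y = y') ∧
    (∀ x y : KElt m n ℓ μ X, FRel m n ℓ x y ↔ ERel m n ℓ y x) :=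
  ⟨fun _ _ hc hplus hdot => KElt.exists_fRel hμa hμl hc hplus hdot,
    fun _ _ hc hminus hdot => KElt.exists_eRel hc hminus hdot,
    fun _ _ _ => KElt.fRel_unique, fun _ _ _ => KElt.eRel_unique,
    fun _ _ => ⟨KElt.eRel_of_fRel, KElt.fRel_of_eRel⟩⟩

/-- the operators `ẽ₀` and `f̃₀` defined on
`𝒦 = ⨆_{η ⊆ μ} SST_𝔸((ℓ^m)/η) × SST_𝔹(μ/η) × X` by the signature rule map `𝒦` into
`𝒦 ∪ {0}` (whenever the scan succeeds the resulting pair of tableaux is again a valid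
element of `𝒦`, and the result is unique), and they are mutually inverse where defined:
`f̃₀(x) = y ⟺ ẽ₀(y) = x`. -/
theorem stmt19 (m n ℓ : ℕ) [NeZero m] [NeZero n] (hl : 0 < ℓ)
    (μ : Fin m → ℕ) (hμa : ∀ i j : Fin m, i ≤ j → μ j ≤ μ i) (hμl : ∀ i, μ i ≤ ℓ)
    (X : Type*) :
    (∀ (x : KElt m n ℓ μ X) (c : ℕ), c < ℓ → plusAt m n ℓ x c →
      (∀ c', c < c' → c' < ℓ → dotAt m n ℓ x c') → ∃ y, FRel m n ℓ x y) ∧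
    (∀ (x : KElt m n ℓ μ X) (c : ℕ), c < ℓ → minusAt m n ℓ x c →
      (∀ c', c < c' → c' < ℓ → dotAt m n ℓ x c') → ∃ y, ERel m n ℓ x y) ∧
    (∀ x y y' : KElt m n ℓ μ X, FRel m n ℓ x y → FRel m n ℓ x y' → y = y') ∧
    (∀ x y y' : KElt m n ℓ μ X, ERel m n ℓ x y → ERel m n ℓ x y' → y = y') ∧
    (∀ x y : KElt m n ℓ μ X, FRel m n ℓ x y ↔ ERel m n ℓ y x) :=
  stmt19_general m n ℓ μ hμa hμl X
end
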